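/- arXiv:1608.04538 — 3 statements merged into one kernel-verified Lean document; each statement's English description precedes it below -/
import Mathlib

section
/- Let Γ be a finite directed graph. Every closed inverse subsemigroup of S(Γ) conjugate to a closed inverse subsemigroup of cycle type is itself of cycle type. Moreover, two closed inverse subsemigroups of cycle type L_{p,d} and L_{q,k} are conjugate in S(Γ) if and only if the directed circuits p and q are conjugate paths, i.e. p = uv and q = vu for some paths u, v. -/
/-- A (finite) directed graph: vertices, edges, and source/target maps. -/
structure DGraph where
  V : Type
  E : Type
  src : E → V
  tgt : E → V

namespace DGraph

/-- The vertex reached after traversing a list of edges from a vertex. -/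
def walkEnd (G : DGraph) : G.V → List G.E → G.V
  | v, [] => v
  | _, e :: l => walkEnd G (G.tgt e) l

/-- The list of edges forms a directed walk starting at the given vertex. -/
def IsWalk (G : DGraph) : G.V → List G.E → Prop
  | _, [] => True
  | v, e :: l => G.src e = v ∧ IsWalk G (G.tgt e) l

variable (G : DGraph)

@[simp] theorem walkEnd_nil (v : G.V) : G.walkEnd v [] = v := rfl
@[simp] theorem walkEnd_cons (v : G.V) (e : G.E) (l : List G.E) :
    G.walkEnd v (e :: l) = G.walkEnd (G.tgt e) l := rfl
@[simp] theorem isWalk_nil (v : G.V) : G.IsWalk v [] := trivial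
@[simp] theorem isWalk_cons (v : G.V) (e : G.E) (l : List G.E) :
    G.IsWalk v (e :: l) ↔ G.src e = v ∧ G.IsWalk (G.tgt e) l := Iff.rfl

theorem isWalk_append (v : G.V) (l1 l2 : List G.E) :
    G.IsWalk v (l1 ++ l2) ↔ G.IsWalk v l1 ∧ G.IsWalk (G.walkEnd v l1) l2 := by
  induction l1 generalizing v with
  | nil => simp [IsWalk, walkEnd]
  | cons e l ih => simp [IsWalk, walkEnd, ih, and_assoc]

/-- A directed path in `G`: an initial vertex together with a compatible
list of edges, traversed in order (empty paths are allowed). -/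
structure DPath (G : DGraph) where
  first : G.V
  edges : List G.E
  wf : G.IsWalk first edges

namespace DPath

variable {G}

/-- The terminal vertex of a directed path. -/
def last (p : G.DPath) : G.V := G.walkEnd p.first p.edges

/-- The list of vertices lying on a directed path. -/
def vertexList (p : G.DPath) : List G.V := p.first :: p.edges.map G.tgt

/-- `q` is a suffix (terminal segment) of `p`: `p = l ⬝ q` for some edge list `l`. -/
def IsSuffixOf (q p : G.DPath) : Prop :=
  ∃ l : List G.E, p.edges = l ++ q.edges ∧ q.first = G.walkEnd p.first l

end DPath

theorem isWalk_chopAppend {u v w : G.DPath} (hs : v.IsSuffixOf u) (hvw : v.first = w.first) :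
    G.IsWalk u.first (u.edges.take (u.edges.length - v.edges.length) ++ w.edges) := by
  obtain ⟨l, hl, hfst⟩ := hs
  rw [hl]
  have hlen : (l ++ v.edges).length - v.edges.length = l.length := by simp
  rw [hlen, List.take_left, G.isWalk_append]
  have hu := u.wf
  rw [hl, G.isWalk_append] at hu
  refine ⟨hu.1, ?_⟩
  rw [← hfst, hvw]
  exact w.wf

theorem isWalk_concat {p q : G.DPath} (h : q.first = p.last) :
    G.IsWalk p.first (p.edges ++ q.edges) := by
  rw [G.isWalk_append]
  refine ⟨p.wf, ?_⟩
  show G.IsWalk p.last q.edges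
  rw [← h]
  exact q.wf

/-- Concatenation of composable directed paths. -/
def concatPath (p q : G.DPath) (h : q.first = p.last) : G.DPath :=
  ⟨p.first, p.edges ++ q.edges, G.isWalk_concat h⟩

theorem isWalk_replicate (a : G.E) (h : G.tgt a = G.src a) (m : ℕ) :
    G.IsWalk (G.src a) (List.replicate m a) := by
  induction m with
  | zero => trivial
  | succ n ih => rw [List.replicate_succ, G.isWalk_cons]; exact ⟨rfl, by rw [h]; exact ih⟩

/-- The path traversing a loop `a` exactly `m` times. -/
def loopPow (a : G.E) (h : G.tgt a = G.src a) (m : ℕ) : G.DPath :=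
  ⟨G.src a, List.replicate m a, G.isWalk_replicate a h m⟩

/-- `p` is a nonempty directed circuit. -/
def IsCircuit (p : G.DPath) : Prop := p.edges ≠ [] ∧ p.last = p.first

/-- `p` and `d` share no nontrivial common prefix (initial segment). -/
def NoCommonPrefix (p d : G.DPath) : Prop :=
  ∀ l : List G.E, l ≠ [] → l <+: p.edges → ¬ l <+: d.edges

end DGraph

/-- The underlying set of the graph inverse semigroup `S(Γ)`: pairs of directed
paths with the same initial vertex, together with a zero element. -/
inductive GIS (G : DGraph) where
  | zero : GIS G
  | pair (a b : G.DPath) (h : a.first = b.first) : GIS G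

namespace GIS

open scoped Classical in
/-- The multiplication of the graph inverse semigroup:
`(t,u)(v,w) = (t,pw)` if `u = pv`, `(pt,w)` if `v = pu`, and `0` otherwise. -/
noncomputable def mul {G : DGraph} : GIS G → GIS G → GIS G
  | .zero, _ => .zero
  | .pair _ _ _, .zero => .zero
  | .pair t u h1, .pair v w h2 =>
    if hs : v.IsSuffixOf u then
      .pair t ⟨t.first, u.edges.take (u.edges.length - v.edges.length) ++ w.edges,
        by rw [h1]; exact G.isWalk_chopAppend hs h2⟩ rfl
    else if hs' : u.IsSuffixOf v then
      .pair ⟨v.first, v.edges.take (v.edges.length - u.edges.length) ++ t.edges,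
        G.isWalk_chopAppend hs' h1.symm⟩ w h2
    else .zero

noncomputable instance {G : DGraph} : Mul (GIS G) := ⟨GIS.mul⟩

/-- The inverse: `(v,w)⁻¹ = (w,v)` and `0⁻¹ = 0`. -/
def inv {G : DGraph} : GIS G → GIS G
  | .zero => .zero
  | .pair a b h => .pair b a h.symm

/-- The natural partial order: `x ≤ y` iff `x = e * y` for some idempotent `e`. -/
def le {G : DGraph} (x y : GIS G) : Prop := ∃ e : GIS G, e * e = e ∧ x = e * y

end GIS

/-- `L` is a closed inverse subsemigroup of `S(Γ)`: a nonempty subset closed under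
multiplication, inverses, and upward closed in the natural partial order. -/
def IsCISS (G : DGraph) (L : Set (GIS G)) : Prop :=
  L.Nonempty ∧ (∀ a ∈ L, ∀ b ∈ L, a * b ∈ L) ∧ (∀ a ∈ L, a.inv ∈ L) ∧
    (∀ a ∈ L, ∀ s : GIS G, GIS.le a s → s ∈ L)

/-- The closed inverse subsemigroup `↑{(u,u)}` of (finite) chain type:
all `(q,q)` with `q` a suffix of `u`. -/
def chainSet (G : DGraph) (u : G.DPath) : Set (GIS G) :=
  {x | ∃ q : G.DPath, q.IsSuffixOf u ∧ x = GIS.pair q q rfl}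

/-- The edge list of the `r`-th power of the path `p`. -/
def powEdges {G : DGraph} (p : G.DPath) (r : ℕ) : List G.E :=
  (List.replicate r p.edges).flatten

/-- The closed inverse subsemigroup of cycle type
`L_{p,d} = {(v p^r d, v p^s d) : r,s ≥ 0, v a suffix of p} ∪ {(q,q) : q a suffix of d}`. -/
def cycleSet (G : DGraph) (p d : G.DPath) : Set (GIS G) :=
  {x | (∃ (r s : ℕ) (v a b : G.DPath) (h : a.first = b.first),
          v.IsSuffixOf p ∧ x = GIS.pair a b h ∧
          a.first = v.first ∧ a.edges = v.edges ++ powEdges p r ++ d.edges ∧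
          b.first = v.first ∧ b.edges = v.edges ++ powEdges p s ++ d.edges) ∨
       (∃ q : G.DPath, q.IsSuffixOf d ∧ x = GIS.pair q q rfl)}

/-- `L` is a chain of idempotents: all elements are idempotent and any two are
comparable in the natural partial order. -/
def IsChainOfIdem (G : DGraph) (L : Set (GIS G)) : Prop :=
  (∀ x ∈ L, x * x = x) ∧ ∀ x ∈ L, ∀ y ∈ L, GIS.le x y ∨ GIS.le y x

/-- The set of right cosets `↑(Lt)` (for `t` with `t t⁻¹ ∈ L`) of a closed inverse
subsemigroup `L`. -/
def cosets (G : DGraph) (L : Set (GIS G)) : Set (Set (GIS G)) :=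
  {C | ∃ t : GIS G, t * t.inv ∈ L ∧ C = {s | ∃ x ∈ L, GIS.le (x * t) s}}

/-- `H` and `K` are conjugate: for some `s`, `s⁻¹Hs ⊆ K` and `sKs⁻¹ ⊆ H`. -/
def Conjugate (G : DGraph) (H K : Set (GIS G)) : Prop :=
  ∃ s : GIS G, (∀ h ∈ H, s.inv * h * s ∈ K) ∧ (∀ k ∈ K, s * k * s.inv ∈ H)

/-- The set of directed paths with initial vertex `v` whose first edge (if any)
is not an edge of `w`. -/
def Npaths (G : DGraph) (v : G.V) (w : G.DPath) : Set G.DPath :=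
  {t | t.first = v ∧ ∀ e, t.edges.head? = some e → e ∉ w.edges}

/-!
Read paths backwards from their end. Then `L_{p,d}` is the set of pairs `(a, b)` of terminal
segments of the left-infinite walk `⋯ p p d` whose lengths are equal, or are both at least `|d|`
and congruent modulo `|p|`; that `p` and `d` share no prefix says that `|d|` is exactly where the
walk becomes periodic. A conjugator `s = (a, b)` must have `a` a terminal segment of this walk, and
conjugating by `s` cuts `a` off and puts `b` in its place: the result is the same kind of set for
the new walk, whose period, read from its own periodic start, is a rotation of `p`. Conversely, for
`p = u v` and `q = v u` the walk `⋯ q q k` is `⋯ p p d` with `d` replaced by `u k`, and the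
corresponding `s` conjugates `L_{p,d}` onto `L_{q,k}`. Since the set of pairs determines the walk,
its period and its periodic start, these are the only conjugates of cycle type.
-/

namespace DGraph

variable {G : DGraph}

namespace DPath

theorem ext {p q : G.DPath} (h1 : p.first = q.first) (h2 : p.edges = q.edges) : p = q := by
  cases p; cases q; simp_all

theorem first_eq_src {p : G.DPath} {e : G.E} {l : List G.E} (h : p.edges = e :: l) :
    p.first = G.src e := by
  have hw := p.wf
  rw [h] at hw
  exact hw.1.symm

theorem ext_of_edges_eq {p q : G.DPath} (h : p.edges = q.edges) (hne : p.edges ≠ []) :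
    p = q := by
  cases hp : p.edges with
  | nil => exact absurd hp hne
  | cons e l => exact ext ((first_eq_src hp).trans (first_eq_src (h.symm.trans hp)).symm) h

theorem IsSuffixOf.refl (p : G.DPath) : p.IsSuffixOf p := ⟨[], rfl, rfl⟩

theorem IsSuffixOf.length_le {u v : G.DPath} (h : u.IsSuffixOf v) :
    u.edges.length ≤ v.edges.length := by
  obtain ⟨l, hl, -⟩ := h
  simp [hl]

theorem IsSuffixOf.eq_of_length {u v : G.DPath} (h : u.IsSuffixOf v)
    (hl : u.edges.length = v.edges.length) : u = v := by
  obtain ⟨l, hle, hf⟩ := h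
  obtain rfl : l = [] := by simpa [hl] using congrArg List.length hle
  exact ext (by simpa using hf) (by simpa using hle.symm)

theorem IsSuffixOf.eq_of_length_le {u v : G.DPath} (h : u.IsSuffixOf v)
    (hl : v.edges.length ≤ u.edges.length) : u = v :=
  h.eq_of_length (le_antisymm h.length_le hl)

theorem IsSuffixOf.take_append {u v : G.DPath} (h : u.IsSuffixOf v) :
    v.edges.take (v.edges.length - u.edges.length) ++ u.edges = v.edges := by
  obtain ⟨l, hl, -⟩ := h
  rw [hl, show (l ++ u.edges).length - u.edges.length = l.length by simp, List.take_left]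

end DPath

theorem walkEnd_take_succ (v : G.V) {l : List G.E} (i : ℕ) (hi : i < l.length) :
    G.walkEnd v (l.take (i + 1)) = G.tgt l[i] := by
  induction l generalizing v i with
  | nil => simp at hi
  | cons e t ih =>
    cases i with
    | zero => simp
    | succ n =>
      simp only [List.take_succ_cons, walkEnd_cons, List.getElem_cons_succ]
      exact ih _ _ (by simpa using hi)

theorem src_getElem_of_isWalk {v : G.V} {l : List G.E} (hw : G.IsWalk v l)
    (i : ℕ) (hi : i < l.length) : G.src l[i] = G.walkEnd v (l.take i) := by
  induction l generalizing v i with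
  | nil => simp at hi
  | cons e t ih =>
    cases i with
    | zero => simpa using hw.1
    | succ n =>
      simp only [List.take_succ_cons, walkEnd_cons, List.getElem_cons_succ]
      exact ih hw.2 n (by simpa using hi)

def revGet (l : List G.E) (i : ℕ) (h : i < l.length) : G.E := l[l.length - 1 - i]'(by omega)

theorem revGet_congr {l : List G.E} {i j : ℕ} (h : i = j) {hi : i < l.length} :
    revGet l i hi = revGet l j (h ▸ hi) := by subst h; rfl

theorem tgt_revGet_zero {p : G.DPath} (h : 0 < p.edges.length) :
    G.tgt (revGet p.edges 0 h) = p.last := by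
  have h1 := G.walkEnd_take_succ p.first (p.edges.length - 1)
    (by omega : p.edges.length - 1 < p.edges.length)
  rw [show p.edges.length - 1 + 1 = p.edges.length by omega, List.take_length] at h1
  unfold revGet DPath.last
  rw [getElem_congr_idx (show p.edges.length - 1 - 0 = p.edges.length - 1 by omega), ← h1]

theorem tgt_revGet_succ {v : G.V} {l : List G.E} (hw : G.IsWalk v l) {i : ℕ}
    (h : i + 1 < l.length) :
    G.tgt (revGet l (i + 1) h) = G.src (revGet l i (by omega)) := by
  have h2 := G.src_getElem_of_isWalk hw (l.length - 1 - i) (by omega)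
  have h3 := G.walkEnd_take_succ v (l.length - 1 - i - 1)
    (by omega : l.length - 1 - i - 1 < l.length)
  rw [show l.length - 1 - i - 1 + 1 = l.length - 1 - i by omega] at h3
  unfold revGet
  rw [getElem_congr_idx (show l.length - 1 - (i + 1) = l.length - 1 - i - 1 by omega), h2, ← h3]

theorem src_revGet_last {v : G.V} {l : List G.E} (hw : G.IsWalk v l) (h : 0 < l.length) :
    G.src (revGet l (l.length - 1) (by omega)) = v := by
  have h2 := G.src_getElem_of_isWalk hw (l.length - 1 - (l.length - 1)) (by omega)
  unfold revGet
  rw [h2, show l.length - 1 - (l.length - 1) = 0 by omega]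
  rfl

/-- A left-infinite walk `⋯ e₂ e₁ e₀` ending at `base`;
`edge i` is the edge at depth `i`. -/
structure Ray (G : DGraph) where
  edge : ℕ → G.E
  base : G.V
  tgt_edge_zero : G.tgt (edge 0) = base
  tgt_edge_succ : ∀ i, G.tgt (edge (i + 1)) = G.src (edge i)

namespace Ray

def vertex (R : Ray G) : ℕ → G.V
  | 0 => R.base
  | i + 1 => G.src (R.edge i)

theorem tgt_edge (R : Ray G) (i : ℕ) : G.tgt (R.edge i) = R.vertex i := by
  cases i with
  | zero => exact R.tgt_edge_zero
  | succ n => exact R.tgt_edge_succ n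

/-- The edges at depths `lo + n - 1, …, lo`, in the order they are traversed. -/
def segEdges (R : Ray G) (lo : ℕ) : ℕ → List G.E
  | 0 => []
  | n + 1 => R.edge (lo + n) :: segEdges R lo n

@[simp] theorem length_segEdges (R : Ray G) (lo n : ℕ) : (R.segEdges lo n).length = n := by
  induction n with
  | zero => rfl
  | succ n ih => simp [segEdges, ih]

theorem isWalk_segEdges (R : Ray G) (lo n : ℕ) :
    G.IsWalk (R.vertex (lo + n)) (R.segEdges lo n) := by
  induction n with
  | zero => trivial
  | succ n ih => exact ⟨rfl, by rw [R.tgt_edge]; exact ih⟩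

def seg (R : Ray G) (lo n : ℕ) : G.DPath :=
  ⟨R.vertex (lo + n), R.segEdges lo n, R.isWalk_segEdges lo n⟩

def tail (R : Ray G) (n : ℕ) : G.DPath := R.seg 0 n

@[simp] theorem seg_first (R : Ray G) (lo n : ℕ) : (R.seg lo n).first = R.vertex (lo + n) := rfl
@[simp] theorem seg_edges (R : Ray G) (lo n : ℕ) : (R.seg lo n).edges = R.segEdges lo n := rfl
@[simp] theorem tail_first (R : Ray G) (n : ℕ) : (R.tail n).first = R.vertex n := by
  show R.vertex (0 + n) = R.vertex n
  rw [Nat.zero_add]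
@[simp] theorem tail_edges (R : Ray G) (n : ℕ) : (R.tail n).edges = R.segEdges 0 n := rfl
@[simp] theorem tail_length (R : Ray G) (n : ℕ) : (R.tail n).edges.length = n := by simp
@[simp] theorem seg_length (R : Ray G) (lo n : ℕ) : (R.seg lo n).edges.length = n := by simp

theorem walkEnd_segEdges (R : Ray G) (lo n : ℕ) :
    G.walkEnd (R.vertex (lo + n)) (R.segEdges lo n) = R.vertex lo := by
  induction n with
  | zero => rfl
  | succ n ih =>
    show G.walkEnd _ (_ :: _) = _
    rw [walkEnd_cons, R.tgt_edge]
    exact ih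

theorem seg_last (R : Ray G) (lo n : ℕ) : (R.seg lo n).last = R.vertex lo :=
  R.walkEnd_segEdges lo n

theorem segEdges_add (R : Ray G) (lo m n : ℕ) :
    R.segEdges lo (m + n) = R.segEdges (lo + m) n ++ R.segEdges lo m := by
  induction n with
  | zero => rfl
  | succ n ih =>
    show R.edge (lo + (m + n)) :: R.segEdges lo (m + n) = _
    rw [ih, show lo + (m + n) = lo + m + n by omega]
    rfl

theorem segEdges_eq_segEdges_iff {R R' : Ray G} {lo lo' n : ℕ} :
    R.segEdges lo n = R'.segEdges lo' n ↔ ∀ x < n, R.edge (lo + x) = R'.edge (lo' + x) := by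
  induction n with
  | zero => simp [segEdges]
  | succ n ih =>
    simp only [segEdges, List.cons.injEq, ih]
    constructor
    · rintro ⟨h1, h2⟩ x hx
      rcases Nat.lt_succ_iff_lt_or_eq.mp hx with hx | rfl
      exacts [h2 x hx, h1]
    · intro h
      exact ⟨h n (by omega), fun x hx => h x (by omega)⟩

theorem take_segEdges {R : Ray G} (lo n m : ℕ) (h : m ≤ n) :
    (R.segEdges lo n).take m = R.segEdges (lo + (n - m)) m := by
  have := R.segEdges_add lo (n - m) m
  rw [show n - m + m = n by omega] at this
  rw [this, List.take_left' (by simp)]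

theorem seg_isSuffixOf_seg (R : Ray G) (lo : ℕ) {m n : ℕ} (h : m ≤ n) :
    (R.seg lo m).IsSuffixOf (R.seg lo n) := by
  refine ⟨R.segEdges (lo + m) (n - m), ?_, ?_⟩
  · show R.segEdges lo n = _ ++ R.segEdges lo m
    rw [← R.segEdges_add lo m (n - m), show m + (n - m) = n by omega]
  · show R.vertex (lo + m) = G.walkEnd (R.vertex (lo + n)) _
    rw [show lo + n = lo + m + (n - m) by omega, R.walkEnd_segEdges]

theorem tail_isSuffixOf_tail (R : Ray G) {m n : ℕ} (h : m ≤ n) :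
    (R.tail m).IsSuffixOf (R.tail n) := R.seg_isSuffixOf_seg 0 h

theorem eq_seg_of_isSuffixOf {z : G.DPath} {R : Ray G} {lo n : ℕ}
    (h : z.IsSuffixOf (R.seg lo n)) : z = R.seg lo z.edges.length ∧ z.edges.length ≤ n := by
  obtain ⟨l, hl, hf⟩ := h
  simp only [seg_edges] at hl
  have hll : l.length + z.edges.length = n := by simpa using (congrArg List.length hl).symm
  have hlen : z.edges.length ≤ n := by omega
  have hsplit := R.segEdges_add lo z.edges.length (n - z.edges.length)
  rw [show z.edges.length + (n - z.edges.length) = n by omega, hl] at hsplit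
  have hinj := List.append_inj hsplit (by simp; omega)
  refine ⟨DPath.ext ?_ hinj.2, hlen⟩
  rw [hf, hinj.1]
  show G.walkEnd (R.vertex (lo + n)) _ = R.vertex (lo + z.edges.length)
  rw [show lo + n = lo + z.edges.length + (n - z.edges.length) by omega, R.walkEnd_segEdges]

theorem eq_tail_of_isSuffixOf {z : G.DPath} {R : Ray G} {n : ℕ} (h : z.IsSuffixOf (R.tail n)) :
    z = R.tail z.edges.length ∧ z.edges.length ≤ n := eq_seg_of_isSuffixOf h

theorem eq_tail_of_edges {R : Ray G} {X : G.DPath} {n : ℕ} (h : X.edges = R.segEdges 0 n)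
    (hn : 0 < n) : X = R.tail n :=
  DPath.ext_of_edges_eq h (by rw [h]; exact List.ne_nil_of_length_pos (by simpa using hn))

def PeriodicFrom (R : Ray G) (pp t : ℕ) : Prop := ∀ i, t ≤ i → R.edge (i + pp) = R.edge i

/-- Together with `PeriodicFrom pp t`: no smaller depth than `t` works. -/
def PeriodStart (R : Ray G) (pp t : ℕ) : Prop := t = 0 ∨ R.edge (t - 1 + pp) ≠ R.edge (t - 1)

namespace PeriodicFrom

variable {R : Ray G} {pp t : ℕ}

theorem add_mul (h : R.PeriodicFrom pp t) (k i : ℕ) (hi : t ≤ i) :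
    R.edge (i + k * pp) = R.edge i := by
  induction k with
  | zero => simp
  | succ k ih => rw [show i + (k + 1) * pp = (i + k * pp) + pp by ring, h _ (by omega), ih]

theorem edge_congr (h : R.PeriodicFrom pp t) {i j : ℕ} (hi : t ≤ i) (hj : t ≤ j)
    (hd : (pp : ℤ) ∣ (i : ℤ) - (j : ℤ)) : R.edge i = R.edge j := by
  wlog hij : j ≤ i generalizing i j
  · exact (this hj hi (by simpa using hd.neg_right) (by omega)).symm
  obtain ⟨z, hz⟩ := hd
  rcases Nat.eq_zero_or_pos pp with rfl | hpp
  · rw [show i = j by simpa [sub_eq_zero] using hz]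
  lift z to ℕ using by nlinarith
  rw [show i = j + z * pp by linarith, h.add_mul z j hj]

theorem vertex_congr (h : R.PeriodicFrom pp t) {i j : ℕ} (hi : t ≤ i) (hj : t ≤ j)
    (hd : (pp : ℤ) ∣ (i : ℤ) - (j : ℤ)) : R.vertex i = R.vertex j := by
  rw [← R.tgt_edge i, ← R.tgt_edge j, h.edge_congr hi hj hd]

theorem segEdges_congr (h : R.PeriodicFrom pp t) {lo lo' : ℕ} (hlo : t ≤ lo) (hlo' : t ≤ lo')
    (hd : (pp : ℤ) ∣ (lo : ℤ) - (lo' : ℤ)) (n : ℕ) : R.segEdges lo n = R.segEdges lo' n :=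
  segEdges_eq_segEdges_iff.2 fun x _ =>
    h.edge_congr (by omega) (by omega) (by push_cast; convert hd using 1; ring)

theorem exists_periodStart (hP : R.PeriodicFrom pp t) :
    ∃ t', R.PeriodicFrom pp t' ∧ R.PeriodStart pp t' ∧
      ∀ t'', R.PeriodicFrom pp t'' → t' ≤ t'' := by
  classical
  have hex : ∃ t, R.PeriodicFrom pp t := ⟨t, hP⟩
  refine ⟨Nat.find hex, Nat.find_spec hex, ?_, fun t'' h => Nat.find_min' hex h⟩
  rcases Nat.eq_zero_or_pos (Nat.find hex) with h0 | h0
  · exact Or.inl h0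
  refine Or.inr fun hcon => Nat.find_min hex (show Nat.find hex - 1 < Nat.find hex by omega) ?_
  intro i hi
  rcases eq_or_lt_of_le hi with rfl | hlt
  · exact hcon
  · exact Nat.find_spec hex i (by omega)

end PeriodicFrom

section AgreeAbove

variable {R R' : Ray G} {α β pp t : ℕ}

def AgreeAbove (R R' : G.Ray) (α β : ℕ) : Prop := ∀ y, R'.edge (β + y) = R.edge (α + y)

theorem AgreeAbove.symm (h : R.AgreeAbove R' α β) : R'.AgreeAbove R β α := fun y => (h y).symm

theorem AgreeAbove.segEdges_eq (h : R.AgreeAbove R' α β) (y n : ℕ) :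
    R'.segEdges (β + y) n = R.segEdges (α + y) n :=
  segEdges_eq_segEdges_iff.2 fun x _ => by rw [Nat.add_assoc, h, Nat.add_assoc]

theorem AgreeAbove.vertex_eq (h : R.AgreeAbove R' α β) (y : ℕ) :
    R'.vertex (β + y) = R.vertex (α + y) := by
  rw [← tgt_edge, h, tgt_edge]

theorem AgreeAbove.add (h : R.AgreeAbove R' α β) (y : ℕ) : R.AgreeAbove R' (α + y) (β + y) :=
  fun x => by rw [Nat.add_assoc, h, Nat.add_assoc]

theorem AgreeAbove.periodicFrom (h : R.AgreeAbove R' α β) (hP : R.PeriodicFrom pp t)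
    (ht : t ≤ α) : R'.PeriodicFrom pp β := fun i hi => by
  have h1 := h (i - β + pp)
  rw [← Nat.add_assoc, Nat.add_sub_cancel' hi] at h1
  have h2 := h (i - β)
  rw [Nat.add_sub_cancel' hi] at h2
  rw [h1, h2, ← Nat.add_assoc]
  exact hP _ (by omega)

theorem AgreeAbove.extend (h : R.AgreeAbove R' α β) (hP : R.PeriodicFrom pp t) (ht : t ≤ α)
    {γ c : ℕ} (hγ : γ ≤ β) (hc : t ≤ c)
    (hseg : R'.segEdges γ (β - γ) = R.segEdges c (β - γ))
    (hd : (pp : ℤ) ∣ ((c + (β - γ) : ℕ) : ℤ) - α) : R.AgreeAbove R' c γ := fun x => by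
  rcases lt_or_ge x (β - γ) with hx | hx
  · exact segEdges_eq_segEdges_iff.1 hseg x hx
  · rw [show γ + x = β + (x - (β - γ)) by omega, h]
    refine hP.edge_congr (by omega) (by omega) ?_
    rw [show ((α + (x - (β - γ)) : ℕ) : ℤ) - ((c + x : ℕ) : ℤ) =
      -(((c + (β - γ) : ℕ) : ℤ) - α) by omega]
    exact hd.neg_right

end AgreeAbove

/-- The ray obtained from `R` by replacing its part below depth `α` with the path `b`. -/
def glue (R : Ray G) (α : ℕ) (b : G.DPath) (hb : b.first = R.vertex α) : Ray G where
  edge i := if h : i < b.edges.length then revGet b.edges i h else R.edge (i - b.edges.length + α)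
  base := b.last
  tgt_edge_zero := by
    by_cases h : 0 < b.edges.length
    · rw [dif_pos h]
      exact tgt_revGet_zero h
    · rw [dif_neg (by omega)]
      have hb0 : b.edges = [] := List.length_eq_zero_iff.mp (by omega)
      have hlast : b.last = b.first := by unfold DPath.last; rw [hb0]; rfl
      show G.tgt (R.edge (0 - b.edges.length + α)) = b.last
      rw [show 0 - b.edges.length + α = α by omega, R.tgt_edge, hlast, hb]
  tgt_edge_succ := by
    intro i
    by_cases h1 : i + 1 < b.edges.length
    · rw [dif_pos h1, dif_pos (show i < b.edges.length by omega)]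
      exact tgt_revGet_succ b.wf h1
    · by_cases h2 : i < b.edges.length
      · rw [dif_neg h1, dif_pos h2]
        show G.tgt (R.edge (i + 1 - b.edges.length + α)) = _
        rw [show i + 1 - b.edges.length + α = α by omega, R.tgt_edge, ← hb,
          revGet_congr (show i = b.edges.length - 1 by omega)]
        exact (src_revGet_last b.wf (by omega)).symm
      · rw [dif_neg h1, dif_neg h2]
        show G.tgt (R.edge (i + 1 - b.edges.length + α)) = _
        rw [show i + 1 - b.edges.length + α = (i - b.edges.length + α) + 1 by omega]
        exact R.tgt_edge_succ _

variable (R : Ray G) (α : ℕ) (b : G.DPath) (hb : b.first = R.vertex α)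

theorem glue_edge_of_lt {i : ℕ} (h : i < b.edges.length) :
    (R.glue α b hb).edge i = revGet b.edges i h := dif_pos h

theorem glue_edge_add (y : ℕ) : (R.glue α b hb).edge (b.edges.length + y) = R.edge (α + y) := by
  show dite _ _ _ = _
  rw [dif_neg (by omega)]
  congr 1
  omega

theorem segEdges_eq_drop {R : Ray G} {l : List G.E} {n : ℕ} (hn : n ≤ l.length)
    (h : ∀ i (hi : i < n), R.edge i = revGet l i (by omega)) :
    R.segEdges 0 n = l.drop (l.length - n) := by
  induction n with
  | zero => simp [segEdges]
  | succ n ih =>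
    show R.edge (0 + n) :: R.segEdges 0 n = _
    rw [Nat.zero_add, ih (by omega) (fun i hi => h i (by omega)), h n (by omega),
      List.drop_eq_getElem_cons (show l.length - (n + 1) < l.length by omega)]
    unfold revGet
    rw [getElem_congr_idx (show l.length - 1 - n = l.length - (n + 1) by omega),
      show l.length - n = l.length - (n + 1) + 1 by omega]

theorem glue_tail : (R.glue α b hb).tail b.edges.length = b := by
  have he : (R.glue α b hb).segEdges 0 b.edges.length = b.edges := by
    simpa using segEdges_eq_drop (R := R.glue α b hb) le_rfl
      (fun i hi => glue_edge_of_lt R α b hb hi)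
  refine DPath.ext ?_ he
  rw [tail_first]
  rcases Nat.eq_zero_or_pos b.edges.length with h0 | h0
  · have hb0 : b.edges = [] := List.length_eq_zero_iff.mp h0
    rw [h0]
    show b.last = b.first
    unfold DPath.last
    rw [hb0]
    rfl
  · obtain ⟨m, hm⟩ : ∃ m, b.edges.length = m + 1 := ⟨b.edges.length - 1, by omega⟩
    rw [hm]
    show G.src ((R.glue α b hb).edge m) = b.first
    rw [glue_edge_of_lt R α b hb (by omega), revGet_congr (show m = b.edges.length - 1 by omega)]
    exact src_revGet_last b.wf h0

theorem glue_segEdges_zero : (R.glue α b hb).segEdges 0 b.edges.length = b.edges :=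
  congrArg DPath.edges (glue_tail R α b hb)

theorem glue_vertex_add (y : ℕ) :
    (R.glue α b hb).vertex (b.edges.length + y) = R.vertex (α + y) := by
  rw [← tgt_edge, glue_edge_add, tgt_edge]

theorem glue_segEdges_add (y n : ℕ) :
    (R.glue α b hb).segEdges (b.edges.length + y) n = R.segEdges (α + y) n :=
  segEdges_eq_segEdges_iff.2 fun x _ => by
    rw [Nat.add_assoc, glue_edge_add, Nat.add_assoc]

theorem glue_seg_add (y n : ℕ) :
    (R.glue α b hb).seg (b.edges.length + y) n = R.seg (α + y) n :=
  DPath.ext (by simp only [seg_first, Nat.add_assoc, glue_vertex_add])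
    (glue_segEdges_add R α b hb y n)

theorem agreeAbove_glue :
    R.AgreeAbove (R.glue α b hb) α b.edges.length :=
  glue_edge_add R α b hb

end Ray

end DGraph

namespace GIS

open DGraph

variable {G : DGraph}

protected theorem zero_mul (x : GIS G) : (zero : GIS G) * x = zero := rfl

protected theorem mul_zero (x : GIS G) : x * (zero : GIS G) = zero := by cases x <;> rfl

theorem pair_ne_zero {a b : G.DPath} {h : a.first = b.first} :
    (pair a b h : GIS G) ≠ zero := fun hh => by cases hh

theorem pair_congr {a b a' b' : G.DPath} {h : a.first = b.first} {h' : a'.first = b'.first}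
    (ha : a = a') (hb : b = b') : (pair a b h : GIS G) = pair a' b' h' := by
  subst ha; subst hb; rfl

theorem inv_pair {a b : G.DPath} {h : a.first = b.first} :
    (pair a b h : GIS G).inv = pair b a h.symm := rfl

variable {t u v w : G.DPath} {h1 : t.first = u.first} {h2 : v.first = w.first}

theorem pair_mul_pair_of_isSuffixOf (hs : v.IsSuffixOf u) :
    (pair t u h1 : GIS G) * pair v w h2 =
      pair t ⟨t.first, u.edges.take (u.edges.length - v.edges.length) ++ w.edges,
        by rw [h1]; exact G.isWalk_chopAppend hs h2⟩ rfl := by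
  show GIS.mul _ _ = _
  simp only [GIS.mul]
  rw [dif_pos hs]

theorem pair_mul_pair_of_isSuffixOf' (hs : u.IsSuffixOf v) :
    (pair t u h1 : GIS G) * pair v w h2 =
      pair ⟨v.first, v.edges.take (v.edges.length - u.edges.length) ++ t.edges,
        G.isWalk_chopAppend hs h1.symm⟩ w h2 := by
  rcases eq_or_lt_of_le hs.length_le with heq | hlt
  · obtain rfl : u = v := hs.eq_of_length heq
    rw [pair_mul_pair_of_isSuffixOf (DPath.IsSuffixOf.refl u)]
    exact pair_congr (DPath.ext h1 (by simp)) (DPath.ext (h1.trans h2) (by simp))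
  · have hns : ¬ v.IsSuffixOf u := fun hc => by have := hc.length_le; omega
    show GIS.mul _ _ = _
    simp only [GIS.mul]
    rw [dif_neg hns, dif_pos hs]

theorem isSuffixOf_of_pair_mul_pair_ne_zero
    (h : (pair t u h1 : GIS G) * pair v w h2 ≠ zero) (hl : u.edges.length ≤ v.edges.length) :
    u.IsSuffixOf v := by
  by_contra hs
  by_cases hs' : v.IsSuffixOf u
  · exact hs ((hs'.eq_of_length_le hl) ▸ DPath.IsSuffixOf.refl v)
  · exact h (by show GIS.mul _ _ = _; simp only [GIS.mul]; rw [dif_neg hs', dif_neg hs])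

theorem isSuffixOf_of_pair_mul_pair_ne_zero'
    (h : (pair t u h1 : GIS G) * pair v w h2 ≠ zero) (hl : v.edges.length ≤ u.edges.length) :
    v.IsSuffixOf u := by
  by_contra hs
  by_cases hs' : u.IsSuffixOf v
  · exact hs ((hs'.eq_of_length_le hl) ▸ DPath.IsSuffixOf.refl u)
  · exact h (by show GIS.mul _ _ = _; simp only [GIS.mul]; rw [dif_neg hs, dif_neg hs'])

theorem pair_mul_self (Z : G.DPath) : (pair Z Z rfl : GIS G) * pair Z Z rfl = pair Z Z rfl := by
  rw [pair_mul_pair_of_isSuffixOf (DPath.IsSuffixOf.refl Z)]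
  exact pair_congr rfl (DPath.ext rfl (by simp))

theorem eq_of_pair_mul_self {Z W : G.DPath} {h : Z.first = W.first}
    (hi : (pair Z W h : GIS G) * pair Z W h = pair Z W h) : Z = W := by
  have hne : (pair Z W h : GIS G) * pair Z W h ≠ zero := by rw [hi]; exact pair_ne_zero
  rcases le_total W.edges.length Z.edges.length with hl | hl
  · have hs := isSuffixOf_of_pair_mul_pair_ne_zero hne hl
    rw [pair_mul_pair_of_isSuffixOf' hs] at hi
    have hlen := congrArg (fun p : G.DPath => p.edges.length) (pair.inj hi).1
    simp only [List.length_append, List.length_take] at hlen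
    exact (hs.eq_of_length_le (by omega)).symm
  · have hs := isSuffixOf_of_pair_mul_pair_ne_zero' hne hl
    rw [pair_mul_pair_of_isSuffixOf hs] at hi
    have hlen := congrArg (fun p : G.DPath => p.edges.length) (pair.inj hi).2
    simp only [List.length_append, List.length_take] at hlen
    exact hs.eq_of_length_le (by omega)

theorem pair_le_pair {X' Y' X Y : G.DPath} {h' : X'.first = Y'.first} {h : X.first = Y.first}
    (hs : X.IsSuffixOf X')
    (he : Y'.edges = X'.edges.take (X'.edges.length - X.edges.length) ++ Y.edges) :
    GIS.le (pair X' Y' h' : GIS G) (pair X Y h) := by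
  refine ⟨pair X' X' rfl, pair_mul_self X', ?_⟩
  rw [pair_mul_pair_of_isSuffixOf hs]
  exact pair_congr rfl (DPath.ext h'.symm he)

theorem exists_eq_pair_of_le {X' Y' : G.DPath} {h' : X'.first = Y'.first} {s : GIS G}
    (hle : GIS.le (pair X' Y' h') s) :
    ∃ (X Y : G.DPath) (h : X.first = Y.first), s = pair X Y h ∧ X.IsSuffixOf X' ∧
      Y'.edges = X'.edges.take (X'.edges.length - X.edges.length) ++ Y.edges := by
  obtain ⟨e, he, hes⟩ := hle
  obtain _ | ⟨Z, W, hZW⟩ := e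
  · rw [GIS.zero_mul] at hes
    exact absurd hes pair_ne_zero
  obtain rfl : Z = W := eq_of_pair_mul_self he
  obtain _ | ⟨X, Y, hXY⟩ := s
  · rw [GIS.mul_zero] at hes
    exact absurd hes pair_ne_zero
  refine ⟨X, Y, hXY, rfl, ?_⟩
  have hne : (pair Z Z hZW : GIS G) * pair X Y hXY ≠ zero := by
    rw [← hes]
    exact pair_ne_zero
  rcases le_total X.edges.length Z.edges.length with hl | hl
  · have hs := isSuffixOf_of_pair_mul_pair_ne_zero' hne hl
    rw [pair_mul_pair_of_isSuffixOf hs] at hes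
    obtain ⟨rfl, hYv⟩ := pair.inj hes
    exact ⟨hs, congrArg DPath.edges hYv⟩
  · have hs := isSuffixOf_of_pair_mul_pair_ne_zero hne hl
    rw [pair_mul_pair_of_isSuffixOf' hs] at hes
    obtain ⟨hZu, rfl⟩ := pair.inj hes
    obtain rfl : X' = X := hZu.trans (DPath.ext rfl hs.take_append)
    exact ⟨DPath.IsSuffixOf.refl _, by simp⟩

theorem exists_pair_mem_of_isSuffixOf {M : Set (GIS G)} (hM : ∀ a ∈ M, ∀ b ∈ M, a * b ∈ M)
    {X Y : G.DPath} {hXY : X.first = Y.first} (hm : pair X Y hXY ∈ M) (hYX : Y.IsSuffixOf X)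
    (k : ℕ) : ∃ (Z : G.DPath) (h : Z.first = Y.first), pair Z Y h ∈ M ∧
      Z.edges.length = X.edges.length + k * (X.edges.length - Y.edges.length) := by
  induction k with
  | zero => exact ⟨X, hXY, hm, by simp⟩
  | succ k ih =>
    obtain ⟨Z, h, hZ, hlen⟩ := ih
    have hprod := hM _ hZ _ hm
    rw [pair_mul_pair_of_isSuffixOf' hYX] at hprod
    refine ⟨_, _, hprod, ?_⟩
    have := hYX.length_le
    simp only [List.length_append, List.length_take, hlen]
    rw [min_eq_left (by omega)]
    ring

end GIS

namespace DGraph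

variable {G : DGraph}

def TailRel (pp t i j : ℕ) : Prop :=
  i = j ∨ (t ≤ i ∧ t ≤ j ∧ (pp : ℤ) ∣ (i : ℤ) - (j : ℤ))

namespace TailRel

variable {pp t i j : ℕ}

theorem symm (h : TailRel pp t i j) : TailRel pp t j i := by
  rcases h with rfl | ⟨h1, h2, h3⟩
  · exact Or.inl rfl
  · exact Or.inr ⟨h2, h1, by simpa using h3.neg_right⟩

theorem of_sub_eq {t' i' j' : ℕ} (h : TailRel pp t i j) (hsub : (i' : ℤ) - j' = i - j)
    (ht : t ≤ i → t ≤ j → t' ≤ i' ∧ t' ≤ j') : TailRel pp t' i' j' := by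
  rcases h with rfl | ⟨h1, h2, h3⟩
  · exact Or.inl (by omega)
  · exact Or.inr ⟨(ht h1 h2).1, (ht h1 h2).2, hsub ▸ h3⟩

theorem add_right (h : TailRel pp t i j) (n : ℕ) : TailRel pp t (i + n) (j + n) :=
  h.of_sub_eq (by omega) fun _ _ => ⟨by omega, by omega⟩

theorem comp {i' j' : ℕ} (h : TailRel pp t i j) (h' : TailRel pp t i' j') (hle : i' ≤ j) :
    TailRel pp t i (j' + (j - i')) := by
  rcases h with rfl | ⟨hi, hj, hd⟩ <;> rcases h' with rfl | ⟨hi', hj', hd'⟩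
  · exact Or.inl (by omega)
  · exact Or.inr ⟨by omega, by omega, by convert hd' using 1; omega⟩
  · exact Or.inr ⟨hi, by omega, by convert hd using 1; omega⟩
  · refine Or.inr ⟨hi, by omega, ?_⟩
    rw [show (i : ℤ) - ((j' + (j - i') : ℕ) : ℤ) = (i - j) + (i' - j') by omega]
    exact dvd_add hd hd'

theorem mono {t' : ℕ} (h : TailRel pp t' i j) (ht : t ≤ t') : TailRel pp t i j :=
  h.of_sub_eq rfl fun _ _ => ⟨by omega, by omega⟩

end TailRel

theorem sub_mod_eq_of_dvd {pp i j t : ℕ} (hi : t ≤ i) (hj : t ≤ j)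
    (hd : (pp : ℤ) ∣ (i : ℤ) - (j : ℤ)) : (i - t) % pp = (j - t) % pp := by
  refine Nat.modEq_iff_dvd.mpr ?_
  rw [show ((j - t : ℕ) : ℤ) - ((i - t : ℕ) : ℤ) = -((i : ℤ) - j) by omega]
  exact dvd_neg.mpr hd

namespace Ray

variable {R R' : G.Ray} {α β pp t t' τ : ℕ} {M : Set (GIS G)}

theorem PeriodicFrom.vertex_eq_of_tailRel (hP : R.PeriodicFrom pp t) {i j : ℕ}
    (h : TailRel pp t i j) : R.vertex i = R.vertex j := by
  rcases h with rfl | ⟨h1, h2, h3⟩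
  · rfl
  · exact hP.vertex_congr h1 h2 h3

theorem PeriodicFrom.segEdges_eq_of_tailRel (hP : R.PeriodicFrom pp t) {i j : ℕ}
    (h : TailRel pp t i j) (n : ℕ) : R.segEdges i n = R.segEdges j n := by
  rcases h with rfl | ⟨h1, h2, h3⟩
  · rfl
  · exact hP.segEdges_congr h1 h2 h3 n

theorem eq_tail_of_edges_eq_append {X : G.DPath} {m n : ℕ}
    (hf : X.first = R.vertex (m + n)) (he : X.edges = R.segEdges m n ++ R.segEdges 0 m) :
    X = R.tail (m + n) :=
  DPath.ext (by rw [hf, tail_first]) (by rw [he, tail_edges, segEdges_add, Nat.zero_add])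

theorem eq_tail_of_edges_eq_append_of_pos {X : G.DPath} {m n : ℕ}
    (he : X.edges = R.segEdges m n ++ R.segEdges 0 m) (hn : 0 < m + n) : X = R.tail (m + n) :=
  eq_tail_of_edges (by rw [he, segEdges_add, Nat.zero_add]) hn

theorem eq_segEdges_of_append_eq {L : List G.E} {I : ℕ}
    (h : L ++ R.segEdges 0 α = R.segEdges 0 I) :
    I = α + L.length ∧ L = R.segEdges α L.length := by
  have hI : I = α + L.length := by
    simpa [add_comm] using (congrArg List.length h).symm
  subst hI
  rw [segEdges_add, Nat.zero_add] at h
  exact ⟨rfl, (List.append_inj h (by simp)).1⟩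

theorem take_tail_edges {u v : ℕ} (h : v ≤ u) :
    (R.tail u).edges.take (u - v) = R.segEdges v (u - v) := by
  simp only [tail_edges]
  rw [take_segEdges 0 u (u - v) (by omega), show 0 + (u - (u - v)) = v by omega]

theorem pair_mul_pair_tail_of_le {X Y : G.DPath} {u v : ℕ} (huv : v ≤ u)
    (h1 : X.first = (R.tail u).first) (h2 : (R.tail v).first = Y.first) :
    ∃ pf, (GIS.pair X (R.tail u) h1 : GIS G) * GIS.pair (R.tail v) Y h2 =
      GIS.pair X ⟨X.first, R.segEdges v (u - v) ++ Y.edges, pf⟩ rfl := by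
  have hw := G.isWalk_chopAppend (R.tail_isSuffixOf_tail huv) h2
  simp only [tail_length, take_tail_edges huv] at hw
  refine ⟨by rw [h1]; exact hw, ?_⟩
  rw [GIS.pair_mul_pair_of_isSuffixOf (R.tail_isSuffixOf_tail huv)]
  exact GIS.pair_congr rfl (DPath.ext rfl (by simp only [tail_length, take_tail_edges huv]))

theorem pair_mul_pair_tail_of_ge {X Y : G.DPath} {u v : ℕ} (huv : u ≤ v)
    (h1 : X.first = (R.tail u).first) (h2 : (R.tail v).first = Y.first) :
    ∃ pf, (GIS.pair X (R.tail u) h1 : GIS G) * GIS.pair (R.tail v) Y h2 =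
      GIS.pair ⟨(R.tail v).first, R.segEdges u (v - u) ++ X.edges, pf⟩ Y h2 := by
  have hw := G.isWalk_chopAppend (R.tail_isSuffixOf_tail huv) h1.symm
  simp only [tail_length, take_tail_edges huv] at hw
  refine ⟨hw, ?_⟩
  rw [GIS.pair_mul_pair_of_isSuffixOf' (R.tail_isSuffixOf_tail huv)]
  exact GIS.pair_congr (DPath.ext rfl (by simp only [tail_length, take_tail_edges huv])) rfl

def tailPairs (R : G.Ray) (pp t : ℕ) : Set (GIS G) :=
  {x | ∃ (i j : ℕ) (h : (R.tail i).first = (R.tail j).first),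
    x = GIS.pair (R.tail i) (R.tail j) h ∧ TailRel pp t i j}

theorem pair_tail_mem_tailPairs (R : G.Ray) (pp t i : ℕ) :
    GIS.pair (R.tail i) (R.tail i) rfl ∈ R.tailPairs pp t :=
  ⟨i, i, rfl, rfl, Or.inl rfl⟩

theorem zero_notMem_tailPairs : GIS.zero ∉ R.tailPairs pp t := by
  rintro ⟨i, j, h, he, -⟩
  exact GIS.pair_ne_zero he.symm

theorem ne_zero_of_mem_tailPairs {x : GIS G} (hx : x ∈ R.tailPairs pp t) : x ≠ GIS.zero :=
  fun h0 => zero_notMem_tailPairs (h0 ▸ hx)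

theorem ne_zero_of_mul_mem_tailPairs {x y : GIS G} (h : x * y ∈ R.tailPairs pp t) :
    x ≠ GIS.zero := fun h0 => by
  rw [h0, GIS.zero_mul] at h
  exact zero_notMem_tailPairs h

theorem ne_zero_of_conj_mem_tailPairs {s m s' : GIS G} (h : s * m * s' ∈ R.tailPairs pp t) :
    m ≠ GIS.zero := fun h0 => by
  rw [h0, GIS.mul_zero, GIS.zero_mul] at h
  exact zero_notMem_tailPairs h

theorem mul_mem_tailPairs (hP : R.PeriodicFrom pp t) {x y : GIS G}
    (hx : x ∈ R.tailPairs pp t) (hy : y ∈ R.tailPairs pp t) : x * y ∈ R.tailPairs pp t := by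
  obtain ⟨i, j, hσ, rfl, hc⟩ := hx
  obtain ⟨i', j', hσ', rfl, hc'⟩ := hy
  rcases le_total i' j with h1 | h1
  · obtain ⟨pf, he⟩ := pair_mul_pair_tail_of_le (X := R.tail i) h1 hσ hσ'
    have hY := eq_tail_of_edges_eq_append (X := ⟨_, _, pf⟩)
      (by dsimp only
          rw [hσ, tail_first, ← hP.vertex_eq_of_tailRel (hc'.add_right (j - i'))]
          congr 1; omega)
      (by dsimp only; rw [tail_edges, hP.segEdges_eq_of_tailRel hc'])
    have hf : (R.tail i).first = (R.tail (j' + (j - i'))).first := by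
      have := congrArg DPath.first hY
      exact this
    rw [he]
    exact ⟨i, _, hf, GIS.pair_congr rfl hY, hc.comp hc' h1⟩
  · obtain ⟨pf, he⟩ := pair_mul_pair_tail_of_ge (Y := R.tail j') h1 hσ hσ'
    have hX := eq_tail_of_edges_eq_append (X := ⟨_, _, pf⟩)
      (by dsimp only
          rw [tail_first, ← hP.vertex_eq_of_tailRel (hc.symm.add_right (i' - j))]
          congr 1; omega)
      (by dsimp only; rw [tail_edges, hP.segEdges_eq_of_tailRel hc.symm])
    rw [he]
    exact ⟨_, j', (congrArg DPath.first hX).symm.trans hσ', GIS.pair_congr hX rfl,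
      (hc'.symm.comp hc.symm h1).symm⟩

theorem inv_mem_tailPairs {x : GIS G} (hx : x ∈ R.tailPairs pp t) :
    x.inv ∈ R.tailPairs pp t := by
  obtain ⟨i, j, hσ, rfl, hc⟩ := hx
  exact ⟨j, i, hσ.symm, rfl, hc.symm⟩

theorem exists_tail_pair_of_le {u v : ℕ} {hσ : (R.tail u).first = (R.tail v).first} {s : GIS G}
    (hle : GIS.le (GIS.pair (R.tail u) (R.tail v) hσ) s) :
    ∃ a b c h, s = GIS.pair (R.tail a) (R.tail b) h ∧ u = a + c ∧ v = b + c ∧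
      R.segEdges a c = R.segEdges b c := by
  obtain ⟨X, Y, hXY, rfl, hs, hYv⟩ := GIS.exists_eq_pair_of_le hle
  obtain ⟨hXt, hXle⟩ := eq_tail_of_isSuffixOf hs
  rw [tail_length, take_tail_edges hXle, tail_edges] at hYv
  have hvlen : v = Y.edges.length + (u - X.edges.length) := by
    have := congrArg List.length hYv
    simp only [length_segEdges, List.length_append] at this
    omega
  rw [hvlen, segEdges_add, Nat.zero_add] at hYv
  obtain ⟨hseg, hYe⟩ := List.append_inj hYv.symm (by simp)
  have hYt : Y = R.tail Y.edges.length := by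
    refine DPath.ext ?_ hYe
    rw [← hXY, hXt, tail_first, tail_first]
    rcases Nat.eq_zero_or_pos (u - X.edges.length) with hz | hz
    · have hu : u = X.edges.length := by omega
      have hv : v = Y.edges.length := by omega
      rw [← hu, ← hv]
      simpa using hσ
    · have h0 := segEdges_eq_segEdges_iff.1 hseg 0 hz
      rw [Nat.add_zero, Nat.add_zero] at h0
      rw [← R.tgt_edge, ← R.tgt_edge, h0]
  exact ⟨X.edges.length, Y.edges.length, u - X.edges.length,
    by rw [← hXt, ← hYt]; exact hXY, GIS.pair_congr hXt hYt, by omega, hvlen, hseg⟩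

theorem PeriodStart.le_of_segEdges_eq (hP : R.PeriodicFrom pp t) (hs : R.PeriodStart pp t)
    {a M c : ℕ} (hM : 0 < M) (hd : (pp : ℤ) ∣ M) (h : R.segEdges a c = R.segEdges (a + M) c)
    (hc : t ≤ a + c) : t ≤ a := by
  have hpp : 0 < pp := by
    rcases Nat.eq_zero_or_pos pp with rfl | hpp
    · simp at hd; omega
    · exact hpp
  by_contra hlt
  refine hs.resolve_left (by omega) ?_
  have h1 := segEdges_eq_segEdges_iff.1 h (t - 1 - a) (by omega)
  rw [show a + (t - 1 - a) = t - 1 by omega, show a + M + (t - 1 - a) = t - 1 + M by omega] at h1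
  rw [h1]
  refine hP.edge_congr (by omega) (by omega) ?_
  rw [show ((t - 1 + pp : ℕ) : ℤ) - ((t - 1 + M : ℕ) : ℤ) = pp - M by omega]
  exact dvd_sub (dvd_refl _) hd

theorem mem_tailPairs_of_le (hP : R.PeriodicFrom pp t) (hs : R.PeriodStart pp t) {x y : GIS G}
    (hx : x ∈ R.tailPairs pp t) (hle : GIS.le x y) : y ∈ R.tailPairs pp t := by
  obtain ⟨u, v, hσ, rfl, hc⟩ := hx
  obtain ⟨a, b, c, h, rfl, rfl, rfl, hseg⟩ := exists_tail_pair_of_le hle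
  refine ⟨a, b, h, rfl, ?_⟩
  rcases hc with huv | ⟨hu, hv, hd⟩
  · exact Or.inl (by omega)
  have hd' : (pp : ℤ) ∣ (a : ℤ) - b := by convert hd using 1; push_cast; ring
  rcases lt_trichotomy a b with hab | rfl | hba
  · have ha := hs.le_of_segEdges_eq hP (M := b - a) (by omega)
      (by rw [show ((b - a : ℕ) : ℤ) = -((a : ℤ) - b) by omega]; exact hd'.neg_right)
      (by rwa [Nat.add_sub_cancel' hab.le]) (by omega)
    exact Or.inr ⟨ha, by omega, hd'⟩
  · exact Or.inl rfl
  · have hb := hs.le_of_segEdges_eq hP (M := a - b) (by omega)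
      (by rw [show ((a - b : ℕ) : ℤ) = (a : ℤ) - b by omega]; exact hd')
      (by rw [Nat.add_sub_cancel' hba.le]; exact hseg.symm) (by omega)
    exact Or.inr ⟨by omega, hb, hd'⟩

theorem isCISS_tailPairs (hP : R.PeriodicFrom pp t) (hs : R.PeriodStart pp t) :
    IsCISS G (R.tailPairs pp t) :=
  ⟨⟨_, pair_tail_mem_tailPairs R pp t 0⟩, fun _ hx _ hy => mul_mem_tailPairs hP hx hy,
    fun _ hx => inv_mem_tailPairs hx, fun _ hx _ hle => mem_tailPairs_of_le hP hs hx hle⟩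

theorem powEdges_seg (hP : R.PeriodicFrom pp t) (r : ℕ) :
    powEdges (R.seg t pp) r = R.segEdges t (r * pp) := by
  induction r with
  | zero => simp [powEdges, segEdges]
  | succ r ih =>
    have hsucc : powEdges (R.seg t pp) (r + 1) = (R.seg t pp).edges ++ powEdges (R.seg t pp) r := by
      simp [powEdges, List.replicate_succ]
    rw [hsucc, ih, show (r + 1) * pp = r * pp + pp by ring, segEdges_add,
      hP.segEdges_congr (lo := t + r * pp) (lo' := t) (by omega) le_rfl ⟨r, by push_cast; ring⟩]
    rfl

theorem segEdges_eq_seg_powEdges_tail (hP : R.PeriodicFrom pp t) (r m : ℕ) :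
    R.segEdges 0 (t + r * pp + m) =
      R.segEdges t m ++ powEdges (R.seg t pp) r ++ (R.tail t).edges := by
  rw [segEdges_add, segEdges_add, Nat.zero_add, Nat.zero_add, powEdges_seg hP,
    hP.segEdges_congr (lo := t + r * pp) (lo' := t) (by omega) le_rfl ⟨r, by push_cast; ring⟩,
    tail_edges, List.append_assoc]

theorem eq_tail_of_eq_suffix_pow (hP : R.PeriodicFrom pp t) {v a : G.DPath}
    (hv : v.IsSuffixOf (R.seg t pp)) (r : ℕ) (haf : a.first = v.first)
    (hae : a.edges = v.edges ++ powEdges (R.seg t pp) r ++ (R.tail t).edges) :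
    a = R.tail (t + r * pp + v.edges.length) := by
  obtain ⟨hveq, -⟩ := eq_seg_of_isSuffixOf hv
  have hvf : v.first = R.vertex (t + v.edges.length) := congrArg DPath.first hveq
  have hve : v.edges = R.segEdges t v.edges.length := congrArg DPath.edges hveq
  refine DPath.ext ?_ ?_
  · rw [haf, hvf, tail_first]
    exact hP.vertex_congr (by omega) (by omega) ⟨-r, by push_cast; ring⟩
  · show a.edges = R.segEdges 0 (t + r * pp + v.edges.length)
    rw [hae, segEdges_eq_seg_powEdges_tail hP, ← hve]

theorem exists_suffix_pow_eq_tail (hpp : 0 < pp) (hP : R.PeriodicFrom pp t) {i : ℕ}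
    (hi : t ≤ i) :
    ∃ (v : G.DPath) (r : ℕ), v.IsSuffixOf (R.seg t pp) ∧ (R.tail i).first = v.first ∧
      (R.tail i).edges = v.edges ++ powEdges (R.seg t pp) r ++ (R.tail t).edges ∧
      v.edges.length = (i - t) % pp := by
  obtain ⟨q, m, hm, hqm, him⟩ :
      ∃ q m, m < pp ∧ m = (i - t) % pp ∧ i = t + q * pp + m := by
    refine ⟨(i - t) / pp, (i - t) % pp, Nat.mod_lt _ hpp, rfl, ?_⟩
    have := Nat.div_add_mod (i - t) pp
    rw [Nat.mul_comm] at this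
    omega
  refine ⟨R.seg t m, q, R.seg_isSuffixOf_seg t hm.le, ?_, ?_, by simp [hqm]⟩
  · rw [tail_first, seg_first]
    exact hP.vertex_congr hi (by omega) ⟨q, by rw [him]; push_cast; ring⟩
  · rw [tail_edges, him, segEdges_eq_seg_powEdges_tail hP]
    rfl

theorem cycleSet_eq_tailPairs (hpp : 0 < pp) (hP : R.PeriodicFrom pp t) {p d : G.DPath}
    (hp : R.seg t pp = p) (hd : R.tail t = d) : cycleSet G p d = R.tailPairs pp t := by
  subst hp hd
  ext x
  constructor
  · rintro (⟨r, s, v, a, b, h, hv, rfl, haf, hae, hbf, hbe⟩ | ⟨q, hq, rfl⟩)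
    · have ha := eq_tail_of_eq_suffix_pow hP hv r haf hae
      have hb := eq_tail_of_eq_suffix_pow hP hv s hbf hbe
      exact ⟨_, _, by rw [← ha, ← hb]; exact h, GIS.pair_congr ha hb,
        Or.inr ⟨by omega, by omega, ⟨(r : ℤ) - s, by push_cast; ring⟩⟩⟩
    · have hq' : q = R.tail q.edges.length := (eq_tail_of_isSuffixOf hq).1
      exact ⟨_, _, by rw [← hq'], GIS.pair_congr hq' hq', Or.inl rfl⟩
  · rintro ⟨i, j, hσ, rfl, rfl | ⟨hti, htj, hdvd⟩⟩
    · rcases le_or_gt i t with hit | hit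
      · exact Or.inr ⟨R.tail i, R.tail_isSuffixOf_tail hit, rfl⟩
      · obtain ⟨v, r, hvp, hf, he, -⟩ := exists_suffix_pow_eq_tail hpp hP hit.le
        exact Or.inl ⟨r, r, v, R.tail i, R.tail i, hσ, hvp, rfl, hf, he, hf, he⟩
    · obtain ⟨v, r, hvp, hf, he, hvm⟩ := exists_suffix_pow_eq_tail hpp hP hti
      obtain ⟨w, s, hwp, hf', he', hwm⟩ := exists_suffix_pow_eq_tail hpp hP htj
      obtain rfl : v = w := by
        rw [(eq_seg_of_isSuffixOf hvp).1, (eq_seg_of_isSuffixOf hwp).1, hvm, hwm,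
          sub_mod_eq_of_dvd hti htj hdvd]
      exact Or.inl ⟨r, s, v, R.tail i, R.tail j, hσ, hvp, rfl, hf, he, hf', he'⟩

/-- The ray `⋯ p p p` winding around the circuit `p`. -/
def ofCircuit (p : G.DPath) (hne : p.edges ≠ []) (hcirc : p.last = p.first) : G.Ray where
  edge i := revGet p.edges (i % p.edges.length) (Nat.mod_lt _ (List.length_pos_iff.mpr hne))
  base := p.first
  tgt_edge_zero := by
    rw [revGet_congr (Nat.zero_mod _), tgt_revGet_zero (List.length_pos_iff.mpr hne)]
    exact hcirc
  tgt_edge_succ := by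
    intro i
    have hnpos : 0 < p.edges.length := List.length_pos_iff.mpr hne
    have hsucc : (i + 1) % p.edges.length = (i % p.edges.length + 1) % p.edges.length :=
      (Nat.mod_add_mod i p.edges.length 1).symm
    rcases Nat.lt_or_ge (i % p.edges.length + 1) p.edges.length with hlt | hge
    · rw [revGet_congr (hsucc.trans (Nat.mod_eq_of_lt hlt))]
      exact tgt_revGet_succ p.wf (by omega)
    · have he : i % p.edges.length + 1 = p.edges.length := by
        have := Nat.mod_lt i hnpos
        omega
      rw [revGet_congr (show (i + 1) % p.edges.length = 0 by rw [hsucc, he, Nat.mod_self]),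
        revGet_congr (show i % p.edges.length = p.edges.length - 1 by omega),
        tgt_revGet_zero hnpos, hcirc]
      exact (src_revGet_last p.wf hnpos).symm

theorem ofCircuit_periodicFrom (p : G.DPath) (hne : p.edges ≠ []) (hcirc : p.last = p.first) :
    (ofCircuit p hne hcirc).PeriodicFrom p.edges.length 0 :=
  fun i _ => revGet_congr (hi := Nat.mod_lt _ (List.length_pos_iff.mpr hne)) (Nat.add_mod_right i _)

theorem ofCircuit_tail (p : G.DPath) (hne : p.edges ≠ []) (hcirc : p.last = p.first) :
    (ofCircuit p hne hcirc).tail p.edges.length = p := by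
  have he : (ofCircuit p hne hcirc).segEdges 0 p.edges.length = p.edges := by
    simpa using segEdges_eq_drop (R := ofCircuit p hne hcirc) le_rfl
      (fun i hi => revGet_congr (hi := Nat.mod_lt _ (List.length_pos_iff.mpr hne))
        (Nat.mod_eq_of_lt hi))
  exact DPath.ext_of_edges_eq he (by rw [tail_edges, he]; exact hne)

/-- The ray `⋯ p p d` realising `L_{p,d}`. -/
theorem exists_ray_of_circuit (p d : G.DPath) (hne : p.edges ≠ []) (hcirc : p.last = p.first)
    (hd : d.first = p.first) :
    ∃ R : G.Ray, R.PeriodicFrom p.edges.length d.edges.length ∧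
      R.tail d.edges.length = d ∧ R.seg d.edges.length p.edges.length = p := by
  have hb : d.first = (ofCircuit p hne hcirc).vertex 0 := hd
  refine ⟨(ofCircuit p hne hcirc).glue 0 d hb, ?_, glue_tail _ _ _ _, ?_⟩
  · simpa using (agreeAbove_glue _ 0 d hb).periodicFrom (ofCircuit_periodicFrom p hne hcirc) le_rfl
  · simpa using (glue_seg_add (ofCircuit p hne hcirc) 0 d hb 0 p.edges.length).trans
      (ofCircuit_tail p hne hcirc)

theorem segEdges_eq_cons (R : G.Ray) (lo : ℕ) {n : ℕ} (hn : 0 < n) :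
    R.segEdges lo n = R.edge (lo + n - 1) :: R.segEdges lo (n - 1) := by
  obtain ⟨m, rfl⟩ : ∃ m, n = m + 1 := ⟨n - 1, by omega⟩
  rfl

theorem noCommonPrefix_iff_periodStart (hpp : 0 < pp) :
    G.NoCommonPrefix (R.seg t pp) (R.tail t) ↔ R.PeriodStart pp t := by
  constructor
  · intro hncp
    rcases Nat.eq_zero_or_pos t with h0 | h0
    · exact Or.inl h0
    refine Or.inr fun hcon => hncp [R.edge (t - 1)] (by simp) ?_ ?_
    · rw [seg_edges, segEdges_eq_cons R t hpp, show t + pp - 1 = t - 1 + pp by omega, hcon]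
      exact ⟨_, rfl⟩
    · rw [tail_edges, segEdges_eq_cons R 0 h0, Nat.zero_add]
      exact ⟨_, rfl⟩
  · rintro hs (_ | ⟨e, l⟩) hl ⟨l₁, hl₁⟩ ⟨l₂, hl₂⟩
    · exact hl rfl
    have ht0 : 0 < t := by
      have := congrArg List.length hl₂
      simp only [tail_edges, length_segEdges, List.length_append, List.length_cons] at this
      omega
    rw [seg_edges, segEdges_eq_cons R t hpp, List.cons_append, List.cons.injEq] at hl₁
    rw [tail_edges, segEdges_eq_cons R 0 ht0, List.cons_append, List.cons.injEq] at hl₂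
    refine hs.resolve_left (by omega) ?_
    rw [show t - 1 + pp = t + pp - 1 by omega, ← hl₁.1, hl₂.1, Nat.zero_add]

theorem tail_length_eq {i j : ℕ} (h : R.tail i = R'.tail j) : i = j := by
  simpa using congrArg (fun z : G.DPath => z.edges.length) h

theorem edge_eq_of_tail_eq (h : ∀ n, R.tail n = R'.tail n) (i : ℕ) :
    R.edge i = R'.edge i := by
  simpa using segEdges_eq_segEdges_iff.1 (congrArg DPath.edges (h (i + 1))) i (by omega)

theorem seg_eq_of_tail_eq (h : ∀ n, R.tail n = R'.tail n) (lo n : ℕ) :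
    R.seg lo n = R'.seg lo n :=
  DPath.ext (by simpa using congrArg DPath.first (h (lo + n)))
    (segEdges_eq_segEdges_iff.2 fun x _ => edge_eq_of_tail_eq h _)

theorem tail_eq_of_tailPairs_eq {pp' : ℕ}
    (heq : R.tailPairs pp t = R'.tailPairs pp' t') (n : ℕ) : R.tail n = R'.tail n := by
  obtain ⟨i, j, hσ, hx, -⟩ : GIS.pair (R.tail n) (R.tail n) rfl ∈ R'.tailPairs pp' t' :=
    heq ▸ pair_tail_mem_tailPairs R pp t n
  obtain ⟨h2, -⟩ := GIS.pair.inj hx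
  rw [h2, tail_length_eq h2]

theorem le_and_dvd_of_tailPairs_subset {pp' : ℕ} (hpp : 0 < pp)
    (hP : R.PeriodicFrom pp t) (hsub : R.tailPairs pp t ⊆ R'.tailPairs pp' t')
    (ht : ∀ n, R.tail n = R'.tail n) : t' ≤ t ∧ pp' ∣ pp := by
  have hσ : (R.tail (t + pp)).first = (R.tail t).first := by
    rw [tail_first, tail_first]
    exact hP.vertex_congr (by omega) le_rfl ⟨1, by push_cast; ring⟩
  have hmem : GIS.pair (R.tail (t + pp)) (R.tail t) hσ ∈ R.tailPairs pp t :=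
    ⟨t + pp, t, hσ, rfl, Or.inr ⟨by omega, le_rfl, ⟨1, by push_cast; ring⟩⟩⟩
  obtain ⟨i, j, _, hx, hij⟩ := hsub hmem
  obtain ⟨hi, hj⟩ := GIS.pair.inj hx
  rw [ht] at hi hj
  rw [← tail_length_eq hi, ← tail_length_eq hj] at hij
  rcases hij with h | ⟨-, hle, hd⟩
  · omega
  · exact ⟨hle, by exact_mod_cast (show ((t + pp : ℕ) : ℤ) - t = pp by omega) ▸ hd⟩

theorem eq_of_tailPairs_eq {pp' : ℕ} (hpp : 0 < pp) (hpp' : 0 < pp')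
    (hP : R.PeriodicFrom pp t) (hP' : R'.PeriodicFrom pp' t')
    (heq : R.tailPairs pp t = R'.tailPairs pp' t') :
    pp = pp' ∧ t = t' ∧ ∀ n, R.tail n = R'.tail n := by
  have ht := tail_eq_of_tailPairs_eq heq
  obtain ⟨h1, h2⟩ := le_and_dvd_of_tailPairs_subset hpp hP heq.le ht
  obtain ⟨h3, h4⟩ := le_and_dvd_of_tailPairs_subset hpp' hP' heq.ge fun n => (ht n).symm
  exact ⟨Nat.dvd_antisymm h4 h2, by omega, ht⟩

theorem AgreeAbove.eq_tail (h : R.AgreeAbove R' α β) {X : G.DPath} {n : ℕ}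
    (hf : X.first = R'.vertex (β + n)) (he : X.edges = R'.segEdges β n ++ (R.tail α).edges) :
    X = R.tail (α + n) :=
  eq_tail_of_edges_eq_append (by rw [hf, h.vertex_eq]) (by
    have hseg := h.segEdges_eq 0 n
    rw [Nat.add_zero, Nat.add_zero] at hseg
    rw [he, hseg, tail_edges])

theorem AgreeAbove.pair_mul_pair_tail (h : R.AgreeAbove R' α β) {Y : G.DPath} {i : ℕ}
    (hi : β ≤ i) (hs : (R.tail α).first = (R'.tail β).first)
    (hY : (R'.tail i).first = Y.first) :
    ∃ h', (GIS.pair (R.tail α) (R'.tail β) hs : GIS G) * GIS.pair (R'.tail i) Y hY =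
      GIS.pair (R.tail (α + (i - β))) Y h' := by
  obtain ⟨pf, he⟩ := Ray.pair_mul_pair_tail_of_ge (X := R.tail α) hi hs hY
  have hX := h.eq_tail (X := ⟨_, _, pf⟩)
    (by dsimp only; rw [tail_first, Nat.add_sub_cancel' hi]) rfl
  rw [he]
  exact ⟨by rw [← hX]; exact hY, GIS.pair_congr hX rfl⟩

theorem AgreeAbove.pair_tail_mul_pair (h : R.AgreeAbove R' α β) {X : G.DPath} {j : ℕ}
    (hj : β ≤ j) (hX : X.first = (R'.tail j).first)
    (hs : (R'.tail β).first = (R.tail α).first) :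
    ∃ h', (GIS.pair X (R'.tail j) hX : GIS G) * GIS.pair (R'.tail β) (R.tail α) hs =
      GIS.pair X (R.tail (α + (j - β))) h' := by
  obtain ⟨pf, he⟩ := Ray.pair_mul_pair_tail_of_le (X := X) (Y := R.tail α) hj hX hs
  have hY := h.eq_tail (X := ⟨_, _, pf⟩) (by dsimp only; rw [hX, tail_first,
    Nat.add_sub_cancel' hj]) rfl
  rw [he]
  exact ⟨by rw [← hY], GIS.pair_congr rfl hY⟩

theorem AgreeAbove.conj_pair_tail (h : R.AgreeAbove R' α β)
    (hs : (R.tail α).first = (R'.tail β).first) {i j : ℕ} (hi : α ≤ i) (hj : α ≤ j)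
    (hσ : (R.tail i).first = (R.tail j).first) :
    ∃ h', (GIS.pair (R.tail α) (R'.tail β) hs).inv * GIS.pair (R.tail i) (R.tail j) hσ *
      GIS.pair (R.tail α) (R'.tail β) hs =
        GIS.pair (R'.tail (β + (i - α))) (R'.tail (β + (j - α))) h' := by
  obtain ⟨h1, e1⟩ := h.symm.pair_mul_pair_tail hi hs.symm hσ
  rw [GIS.inv_pair, e1]
  exact h.symm.pair_tail_mul_pair hj h1 hs

theorem conj_pair_tail_self {i : ℕ} (hi : i ≤ α)
    (hs : (R.tail α).first = (R'.tail β).first) :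
    (GIS.pair (R.tail α) (R'.tail β) hs).inv * GIS.pair (R.tail i) (R.tail i) rfl *
      GIS.pair (R.tail α) (R'.tail β) hs = GIS.pair (R'.tail β) (R'.tail β) rfl := by
  rw [GIS.inv_pair]
  obtain ⟨pf1, e1⟩ := pair_mul_pair_tail_of_le (X := R'.tail β) (Y := R.tail i) hi hs.symm rfl
  have hA : (⟨_, _, pf1⟩ : G.DPath) = R.tail α :=
    (eq_tail_of_edges_eq_append (m := i) (n := α - i) (by dsimp only; rw [← hs, tail_first,
      Nat.add_sub_cancel' hi]) rfl).trans (by rw [Nat.add_sub_cancel' hi])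
  rw [e1, GIS.pair_congr rfl hA (h' := hs.symm)]
  obtain ⟨pf2, e2⟩ :=
    pair_mul_pair_tail_of_le (X := R'.tail β) (Y := R'.tail β) le_rfl hs.symm hs
  rw [e2]
  exact GIS.pair_congr rfl (DPath.ext rfl (by simp [segEdges]))

theorem AgreeAbove.conj_mem_tailPairs (h : R.AgreeAbove R' α β) (hτ : τ ≤ β)
    (hs : (R.tail α).first = (R'.tail β).first) {m : GIS G} (hm : m ∈ R.tailPairs pp α) :
    (GIS.pair (R.tail α) (R'.tail β) hs).inv * m * GIS.pair (R.tail α) (R'.tail β) hs ∈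
      R'.tailPairs pp τ := by
  obtain ⟨i, j, hσ, rfl, hc⟩ := hm
  rcases hc with rfl | ⟨hi, hj, hd⟩
  · rcases le_or_gt α i with hi | hi
    · obtain ⟨h', e⟩ := h.conj_pair_tail hs hi hi hσ
      rw [e]
      exact ⟨_, _, h', rfl, Or.inl rfl⟩
    · rw [conj_pair_tail_self hi.le hs]
      exact pair_tail_mem_tailPairs R' pp τ β
  · obtain ⟨h', e⟩ := h.conj_pair_tail hs hi hj hσ
    rw [e]
    exact ⟨_, _, h', rfl, Or.inr ⟨by omega, by omega, by convert hd using 1; omega⟩⟩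

theorem AgreeAbove.conj_mem_tailPairs_of_le_of_lt (h : R.AgreeAbove R' α β)
    (hP' : R'.PeriodicFrom pp τ) (hs : (R.tail α).first = (R'.tail β).first) {i j : ℕ}
    (hi : β ≤ i) (hj : j < β) (hσ : (R'.tail i).first = (R'.tail j).first)
    (hc : TailRel pp τ i j) :
    GIS.pair (R.tail α) (R'.tail β) hs * GIS.pair (R'.tail i) (R'.tail j) hσ *
      (GIS.pair (R.tail α) (R'.tail β) hs).inv ∈ R.tailPairs pp α := by
  obtain ⟨hτi, hτj, hd⟩ := hc.resolve_left (by omega)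
  obtain ⟨h1, e1⟩ := h.pair_mul_pair_tail hi hs hσ
  obtain ⟨pf, e2⟩ := Ray.pair_mul_pair_tail_of_ge (X := R.tail (α + (i - β))) (Y := R.tail α)
    hj.le h1 hs.symm
  have hX :=
    eq_tail_of_edges_eq_append_of_pos (X := ⟨_, _, pf⟩) (m := α + (i - β)) (n := β - j)
    (by have hseg := h.segEdges_eq (i - β) (β - j)
        rw [Nat.add_sub_cancel' hi] at hseg
        dsimp only
        rw [hP'.segEdges_congr hτj hτi (by simpa using hd.neg_right), hseg, tail_edges])
    (by omega)
  rw [GIS.inv_pair, e1, e2]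
  exact ⟨_, α, (congrArg DPath.first hX).symm.trans hs.symm, GIS.pair_congr hX rfl,
    hc.of_sub_eq (by omega) fun _ _ => ⟨by omega, le_rfl⟩⟩

theorem AgreeAbove.conj_mem_tailPairs_of_lt (h : R.AgreeAbove R' α β)
    (hP' : R'.PeriodicFrom pp τ)
    (hτ : τ ≤ β) (hs : (R.tail α).first = (R'.tail β).first) {i j : ℕ} (hi : i < β)
    (hσ : (R'.tail i).first = (R'.tail j).first) (hc : TailRel pp τ i j) :
    GIS.pair (R.tail α) (R'.tail β) hs * GIS.pair (R'.tail i) (R'.tail j) hσ *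
      (GIS.pair (R.tail α) (R'.tail β) hs).inv ∈ R.tailPairs pp α := by
  obtain ⟨pf, e1⟩ := Ray.pair_mul_pair_tail_of_le (X := R.tail α) (Y := R'.tail j) hi.le hs hσ
  have hY := eq_tail_of_edges_eq_append (X := ⟨_, _, pf⟩) (m := j) (n := β - i)
    (by dsimp only
        rw [hs, tail_first, ← hP'.vertex_eq_of_tailRel (hc.add_right (β - i)),
          Nat.add_sub_cancel' hi.le])
    (by dsimp only; rw [hP'.segEdges_eq_of_tailRel hc, tail_edges])
  have h1 : (R.tail α).first = (R'.tail (j + (β - i))).first := by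
    have := congrArg DPath.first hY
    exact this
  rw [GIS.inv_pair, e1, GIS.pair_congr rfl hY (h' := h1)]
  rcases le_or_gt β (j + (β - i)) with hν | hν
  · obtain ⟨h2, e2⟩ := h.pair_tail_mul_pair hν h1 hs.symm
    rw [e2]
    exact ⟨α, _, h2, rfl, hc.of_sub_eq (by omega) fun _ _ => ⟨le_rfl, by omega⟩⟩
  · obtain ⟨hτi, hτj, hd⟩ := hc.resolve_left (by omega)
    obtain ⟨pf2, e2⟩ := Ray.pair_mul_pair_tail_of_ge (X := R.tail α) (Y := R.tail α) hν.le h1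
      hs.symm
    have hX := eq_tail_of_edges_eq_append_of_pos (X := ⟨_, _, pf2⟩) (m := α)
      (n := β - (j + (β - i)))
      (by have hseg := h.segEdges_eq 0 (β - (j + (β - i)))
          rw [Nat.add_zero, Nat.add_zero] at hseg
          dsimp only
          rw [hP'.segEdges_congr (lo' := β) (by omega) hτ (by
            rw [show ((j + (β - i) : ℕ) : ℤ) - β = -((i : ℤ) - j) by omega]
            exact hd.neg_right),
            hseg, tail_edges])
      (by omega)
    rw [e2]
    exact ⟨_, α, (congrArg DPath.first hX).symm.trans hs.symm, GIS.pair_congr hX rfl,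
      hc.of_sub_eq (by omega) fun _ _ => ⟨by omega, le_rfl⟩⟩

theorem AgreeAbove.conj_inv_mem_tailPairs (h : R.AgreeAbove R' α β) (hP' : R'.PeriodicFrom pp τ)
    (hτ : τ ≤ β) (hs : (R.tail α).first = (R'.tail β).first) {m : GIS G}
    (hm : m ∈ R'.tailPairs pp τ) :
    GIS.pair (R.tail α) (R'.tail β) hs * m * (GIS.pair (R.tail α) (R'.tail β) hs).inv ∈
      R.tailPairs pp α := by
  obtain ⟨i, j, hσ, rfl, hc⟩ := hm
  rcases lt_or_ge i β with hi | hi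
  · exact h.conj_mem_tailPairs_of_lt hP' hτ hs hi hσ hc
  rcases lt_or_ge j β with hj | hj
  · exact h.conj_mem_tailPairs_of_le_of_lt hP' hs hi hj hσ hc
  obtain ⟨h', e⟩ := h.symm.conj_pair_tail hs.symm hi hj hσ
  show (GIS.pair (R'.tail β) (R.tail α) hs.symm).inv * _ *
    GIS.pair (R'.tail β) (R.tail α) hs.symm ∈ _
  rw [e]
  exact ⟨_, _, h', rfl, hc.of_sub_eq (by omega) fun _ _ => ⟨by omega, by omega⟩⟩

theorem AgreeAbove.eq_tail_of_take (h : R.AgreeAbove R' α β) {X : G.DPath}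
    (hX : (R'.tail β).IsSuffixOf X)
    (htk : X.edges.take (X.edges.length - β) = R.segEdges α (X.edges.length - β)) :
    X = R'.tail X.edges.length := by
  have hlen := hX.length_le
  rw [tail_length] at hlen
  rcases eq_or_lt_of_le hlen with heq | hlt
  · rw [← heq]
    exact (hX.eq_of_length (by simpa using heq)).symm
  refine eq_tail_of_edges ?_ (by omega)
  have happ := hX.take_append
  have hseg := h.segEdges_eq 0 (X.edges.length - β)
  rw [Nat.add_zero, Nat.add_zero] at hseg
  rw [tail_length, htk, ← hseg, tail_edges] at happ
  have hsplit := R'.segEdges_add 0 β (X.edges.length - β)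
  rw [Nat.zero_add, Nat.add_sub_cancel' hlen] at hsplit
  rw [hsplit]
  exact happ.symm

theorem eq_tail_of_pair_mul_pair_tail_ne_zero {a b : G.DPath} {hab : b.first = a.first} {n : ℕ}
    (hn : a.edges.length ≤ n)
    (hne : GIS.pair b a hab * GIS.pair (R.tail n) (R.tail n) rfl ≠ GIS.zero) :
    a = R.tail a.edges.length :=
  (eq_tail_of_isSuffixOf (GIS.isSuffixOf_of_pair_mul_pair_ne_zero hne (by simpa using hn))).1

theorem AgreeAbove.tailRel_of_conj_mem (h : R.AgreeAbove R' α β)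
    (hs : (R.tail α).first = (R'.tail β).first) {X Y : G.DPath} {hXY : X.first = Y.first}
    (hX : β ≤ X.edges.length) (hY : β ≤ Y.edges.length)
    (hc : GIS.pair (R.tail α) (R'.tail β) hs * GIS.pair X Y hXY *
      (GIS.pair (R.tail α) (R'.tail β) hs).inv ∈ R.tailPairs pp t) :
    X = R'.tail X.edges.length ∧ Y = R'.tail Y.edges.length ∧
      TailRel pp (β + (t - α)) X.edges.length Y.edges.length := by
  have hne1 := ne_zero_of_mul_mem_tailPairs hc
  have hBX := GIS.isSuffixOf_of_pair_mul_pair_ne_zero hne1 (by rwa [tail_length])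
  rw [GIS.pair_mul_pair_of_isSuffixOf' hBX, GIS.inv_pair] at hc
  have hne2 := ne_zero_of_mem_tailPairs hc
  have hBY := GIS.isSuffixOf_of_pair_mul_pair_ne_zero' hne2 (by rwa [tail_length])
  rw [GIS.pair_mul_pair_of_isSuffixOf hBY] at hc
  obtain ⟨I, J, _, he, hIJ⟩ := hc
  obtain ⟨hI, hJ⟩ := GIS.pair.inj he
  have hIe := congrArg DPath.edges hI
  have hJe := congrArg DPath.edges hJ
  dsimp only at hIe hJe
  simp only [tail_edges, length_segEdges] at hIe hJe
  obtain ⟨rfl, hXt⟩ := eq_segEdges_of_append_eq hIe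
  obtain ⟨rfl, hYt⟩ := eq_segEdges_of_append_eq hJe
  simp only [List.length_take, min_eq_left (Nat.sub_le _ _)] at hXt hYt
  exact ⟨h.eq_tail_of_take hBX hXt, h.eq_tail_of_take hBY hYt,
    hIJ.of_sub_eq (by simp only [List.length_take]; omega)
      fun h1 h2 => by simp only [List.length_take] at h1 h2; omega⟩

theorem AgreeAbove.periodicFrom_of_conj_mem (h : R.AgreeAbove R' α β) (hP : R.PeriodicFrom pp t)
    (hs : (R.tail α).first = (R'.tail β).first) {X Y : G.DPath} {hXY : X.first = Y.first}
    (hX : β ≤ X.edges.length) (hY : Y.edges.length < β)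
    (hc : GIS.pair (R.tail α) (R'.tail β) hs * GIS.pair X Y hXY *
      (GIS.pair (R.tail α) (R'.tail β) hs).inv ∈ R.tailPairs pp t) :
    X = R'.tail X.edges.length ∧ Y = R'.tail Y.edges.length ∧
      R'.PeriodicFrom pp Y.edges.length ∧
      (pp : ℤ) ∣ (X.edges.length : ℤ) - Y.edges.length := by
  have hne1 := ne_zero_of_mul_mem_tailPairs hc
  have hBX := GIS.isSuffixOf_of_pair_mul_pair_ne_zero hne1 (by rwa [tail_length])
  rw [GIS.pair_mul_pair_of_isSuffixOf' hBX, GIS.inv_pair] at hc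
  have hne2 := ne_zero_of_mem_tailPairs hc
  have hYB := GIS.isSuffixOf_of_pair_mul_pair_ne_zero hne2 (by rw [tail_length]; omega)
  rw [GIS.pair_mul_pair_of_isSuffixOf' hYB] at hc
  obtain ⟨I, J, _, he, hIJ⟩ := hc
  obtain ⟨hI, hJ⟩ := GIS.pair.inj he
  obtain rfl : α = J := tail_length_eq hJ
  have hIe := congrArg DPath.edges hI
  dsimp only at hIe
  simp only [tail_edges, length_segEdges, ← List.append_assoc] at hIe
  obtain ⟨rfl, hL⟩ := eq_segEdges_of_append_eq hIe
  simp only [List.length_append, List.length_take, min_eq_left (Nat.sub_le _ _),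
    length_segEdges] at hL hIJ
  rw [Nat.add_comm, segEdges_add] at hL
  obtain ⟨hbt, hXt⟩ := List.append_inj hL (by simp)
  rw [take_segEdges 0 β _ (by omega), Nat.zero_add,
    show β - (β - Y.edges.length) = Y.edges.length by omega] at hbt
  obtain ⟨-, hτ, hd⟩ := hIJ.resolve_left (by omega)
  have hd' : (pp : ℤ) ∣ (X.edges.length : ℤ) - Y.edges.length := by convert hd using 1; omega
  have hagree := h.extend hP hτ hY.le (by omega) hbt (by convert hd using 1; omega)
  refine ⟨h.eq_tail_of_take hBX hXt, (eq_tail_of_isSuffixOf hYB).1,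
    hagree.periodicFrom hP (by omega), hd'⟩

/-- Pumping the loop `X = l Y` pushes a short element of `M` past depth `β`. -/
theorem AgreeAbove.periodicFrom_of_mem (h : R.AgreeAbove R' α β) (hP : R.PeriodicFrom pp t)
    (hs : (R.tail α).first = (R'.tail β).first) (hM : ∀ a ∈ M, ∀ b ∈ M, a * b ∈ M)
    (hout : ∀ m ∈ M, GIS.pair (R.tail α) (R'.tail β) hs * m *
      (GIS.pair (R.tail α) (R'.tail β) hs).inv ∈ R.tailPairs pp t)
    {X Y : G.DPath} {hXY : X.first = Y.first} (hm : GIS.pair X Y hXY ∈ M)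
    (hYX : Y.edges.length < X.edges.length) (hX : X.edges.length < β) :
    X = R'.tail X.edges.length ∧ Y = R'.tail Y.edges.length ∧
      R'.PeriodicFrom pp Y.edges.length ∧
      (pp : ℤ) ∣ (X.edges.length : ℤ) - Y.edges.length := by
  have hXB := GIS.isSuffixOf_of_pair_mul_pair_ne_zero' (ne_zero_of_mul_mem_tailPairs (hout _ hm))
    (by rw [tail_length]; omega)
  have hXt := (eq_tail_of_isSuffixOf hXB).1
  have hYX' := GIS.isSuffixOf_of_pair_mul_pair_ne_zero
    (ne_zero_of_conj_mem_tailPairs (hout _ (hM _ hm _ hm))) hYX.le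
  have hYt : Y = R'.tail Y.edges.length :=
    (eq_tail_of_isSuffixOf (show Y.IsSuffixOf (R'.tail X.edges.length) from hXt ▸ hYX')).1
  have hpump : ∀ k, β ≤ k → R'.PeriodicFrom pp Y.edges.length ∧
      (pp : ℤ) ∣ ((X.edges.length + k * (X.edges.length - Y.edges.length) : ℕ) : ℤ) -
        Y.edges.length := by
    intro k hk
    obtain ⟨Z, hZ, hmZ, hlen⟩ := GIS.exists_pair_mem_of_isSuffixOf hM hm hYX' k
    obtain ⟨-, -, hPY, hd⟩ := h.periodicFrom_of_conj_mem hP hs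
      (by
        have := Nat.le_mul_of_pos_right k (show 0 < X.edges.length - Y.edges.length by omega)
        omega) (by omega) (hout _ hmZ)
    exact ⟨hPY, hlen ▸ hd⟩
  obtain ⟨hPY, hd1⟩ := hpump β le_rfl
  obtain ⟨-, hd2⟩ := hpump (β + 1) (by omega)
  refine ⟨hXt, hYt, hPY, ?_⟩
  have := dvd_sub hd2 hd1
  rwa [show ((X.edges.length + (β + 1) * (X.edges.length - Y.edges.length) : ℕ) : ℤ) -
    Y.edges.length - (((X.edges.length + β * (X.edges.length - Y.edges.length) : ℕ) : ℤ) -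
    Y.edges.length) = (X.edges.length : ℤ) - Y.edges.length by push_cast [hYX.le]; ring] at this

theorem AgreeAbove.subset_tailPairs (h : R.AgreeAbove R' α β) (hP : R.PeriodicFrom pp t)
    (hs : (R.tail α).first = (R'.tail β).first) (hM : IsCISS G M)
    (hout : ∀ m ∈ M, GIS.pair (R.tail α) (R'.tail β) hs * m *
      (GIS.pair (R.tail α) (R'.tail β) hs).inv ∈ R.tailPairs pp t)
    (hmin : ∀ t'', R'.PeriodicFrom pp t'' → t' ≤ t'') : M ⊆ R'.tailPairs pp t' := by
  have hmax : t' ≤ β + (t - α) := hmin _ ((h.add (t - α)).periodicFrom hP (by omega))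
  have hlt : ∀ (X Y : G.DPath) (hXY : X.first = Y.first), GIS.pair X Y hXY ∈ M →
      Y.edges.length < X.edges.length → GIS.pair X Y hXY ∈ R'.tailPairs pp t' := by
    intro X Y hXY hm hYX
    obtain ⟨hXt, hYt, hr⟩ : X = R'.tail X.edges.length ∧ Y = R'.tail Y.edges.length ∧
        TailRel pp t' X.edges.length Y.edges.length := by
      rcases lt_or_ge X.edges.length β with hX | hX
      · obtain ⟨hXt, hYt, hPY, hd⟩ := h.periodicFrom_of_mem hP hs hM.2.1 hout hm hYX hX
        exact ⟨hXt, hYt, Or.inr ⟨by have := hmin _ hPY; omega, hmin _ hPY, hd⟩⟩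
      rcases lt_or_ge Y.edges.length β with hY | hY
      · obtain ⟨hXt, hYt, hPY, hd⟩ := h.periodicFrom_of_conj_mem hP hs hX hY (hout _ hm)
        exact ⟨hXt, hYt, Or.inr ⟨by have := hmin _ hPY; omega, hmin _ hPY, hd⟩⟩
      · obtain ⟨hXt, hYt, hr⟩ := h.tailRel_of_conj_mem hs hX hY (hout _ hm)
        exact ⟨hXt, hYt, hr.mono hmax⟩
    exact ⟨_, _, by rw [← hXt, ← hYt]; exact hXY, GIS.pair_congr hXt hYt, hr⟩
  rintro (_ | ⟨X, Y, hXY⟩) hm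
  · exact absurd rfl (ne_zero_of_conj_mem_tailPairs (hout _ hm))
  rcases lt_trichotomy Y.edges.length X.edges.length with hYX | hXY' | hXY'
  · exact hlt X Y hXY hm hYX
  · obtain rfl : Y = X := (GIS.isSuffixOf_of_pair_mul_pair_ne_zero
      (ne_zero_of_conj_mem_tailPairs (hout _ (hM.2.1 _ hm _ hm))) hXY'.le).eq_of_length hXY'
    have hXt : Y = R'.tail Y.edges.length := by
      rcases lt_or_ge Y.edges.length β with hX | hX
      · exact (eq_tail_of_isSuffixOf (GIS.isSuffixOf_of_pair_mul_pair_ne_zero'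
          (ne_zero_of_mul_mem_tailPairs (hout _ hm)) (by rw [tail_length]; omega))).1
      · exact (h.tailRel_of_conj_mem hs hX hX (hout _ hm)).1
    exact ⟨_, _, by rw [← hXt], GIS.pair_congr hXt hXt, Or.inl rfl⟩
  · exact inv_mem_tailPairs (hlt Y X hXY.symm (hM.2.2.1 _ hm) hXY')

theorem AgreeAbove.tailPairs_subset (h : R.AgreeAbove R' α β) (hpp : 0 < pp)
    (hP : R.PeriodicFrom pp t) (hP' : R'.PeriodicFrom pp t')
    (hs : (R.tail α).first = (R'.tail β).first) (hM : IsCISS G M)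
    (hin : ∀ x ∈ R.tailPairs pp t, (GIS.pair (R.tail α) (R'.tail β) hs).inv * x *
      GIS.pair (R.tail α) (R'.tail β) hs ∈ M) : R'.tailPairs pp t' ⊆ M := by
  rintro x ⟨i, j, hσ, rfl, hc⟩
  obtain ⟨K, hK, hpK⟩ : ∃ K, β + t + 1 ≤ K ∧ (pp : ℤ) ∣ K :=
    ⟨(β + t + 1) * pp, Nat.le_mul_of_pos_right _ hpp, ⟨β + t + 1, by push_cast; ring⟩⟩
  have hc1 : TailRel pp t (α + (i + K - β)) (α + (j + K - β)) :=
    hc.of_sub_eq (by omega) fun _ _ => ⟨by omega, by omega⟩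
  have hσ1 : (R.tail (α + (i + K - β))).first = (R.tail (α + (j + K - β))).first := by
    rw [tail_first, tail_first]
    exact hP.vertex_eq_of_tailRel hc1
  have hσK : (R'.tail (i + K)).first = (R'.tail (j + K)).first := by
    rw [tail_first, tail_first]
    exact hP'.vertex_eq_of_tailRel (hc.add_right K)
  obtain ⟨h', e⟩ := h.conj_pair_tail hs (by omega) (by omega) hσ1
  have hmem := hin _ ⟨_, _, hσ1, rfl, hc1⟩
  rw [e, GIS.pair_congr (h' := hσK) (by congr 1; omega) (by congr 1; omega)] at hmem
  refine hM.2.2.2 _ hmem _ (GIS.pair_le_pair (R'.tail_isSuffixOf_tail (by omega)) ?_)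
  simp only [tail_length]
  rw [take_tail_edges (by omega), Nat.add_sub_cancel_left, hP'.segEdges_eq_of_tailRel hc,
    tail_edges, tail_edges, segEdges_add, Nat.zero_add]

theorem PeriodicFrom.exists_rotation (hP : R.PeriodicFrom pp t) {D : ℕ} (hD : D < pp)
    (h : R.AgreeAbove R' (t + D) t') :
    ∃ (u v : G.DPath) (h1 : v.first = u.last) (h2 : u.first = v.last),
      R.seg t pp = G.concatPath u v h1 ∧ R'.seg t' pp = G.concatPath v u h2 := by
  have hper : R.vertex (t + pp) = R.vertex t :=
    hP.vertex_congr (by omega) le_rfl ⟨1, by push_cast; ring⟩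
  refine ⟨R.seg (t + D) (pp - D), R.seg t D, (R.seg_last _ _).symm, ?_, ?_, ?_⟩
  · rw [seg_first, seg_last, show t + D + (pp - D) = t + pp by omega, hper]
  · refine DPath.ext (by simp only [seg_first]; congr 1; omega) ?_
    show R.segEdges t pp = R.segEdges (t + D) (pp - D) ++ R.segEdges t D
    rw [← segEdges_add, show D + (pp - D) = pp by omega]
  · refine DPath.ext ?_ ?_
    · show R'.vertex (t' + pp) = R.vertex (t + D)
      rw [h.vertex_eq, hP.vertex_congr (i := t + D + pp) (j := t + D) (by omega) (by omega)
        ⟨1, by push_cast; ring⟩]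
    · show R'.segEdges t' pp = R.segEdges t D ++ R.segEdges (t + D) (pp - D)
      have h1 := h.segEdges_eq 0 (pp - D)
      rw [Nat.add_zero, Nat.add_zero] at h1
      have hsplit := R'.segEdges_add t' (pp - D) D
      rw [Nat.sub_add_cancel hD.le] at hsplit
      rw [hsplit, h.segEdges_eq, h1,
        show t + D + (pp - D) = t + pp by omega,
        hP.segEdges_congr (lo := t + pp) (lo' := t) (by omega) le_rfl ⟨1, by push_cast; ring⟩]

theorem AgreeAbove.exists_rotation (h : R.AgreeAbove R' α β) (hpp : 0 < pp)
    (hP : R.PeriodicFrom pp t) (hP' : R'.PeriodicFrom pp t') :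
    ∃ (u v : G.DPath) (h1 : v.first = u.last) (h2 : u.first = v.last),
      R.seg t pp = G.concatPath u v h1 ∧ R'.seg t' pp = G.concatPath v u h2 := by
  obtain ⟨K, hK⟩ : ∃ K, β + t ≤ K * pp := ⟨β + t, Nat.le_mul_of_pos_right _ hpp⟩
  obtain ⟨J, hJdef⟩ : ∃ J, J = α + (t' + K * pp - β) - t := ⟨_, rfl⟩
  have hJ := Nat.div_add_mod J pp
  refine hP.exists_rotation (D := J % pp) (Nat.mod_lt _ hpp) fun y => ?_
  rw [← hP'.add_mul K (t' + y) (by omega),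
    show t' + y + K * pp = β + (t' + K * pp - β + y) by omega, h,
    ← hP.add_mul (J / pp) (t + J % pp + y) (by omega)]
  congr 1
  rw [Nat.mul_comm] at hJ
  omega

theorem exists_eq_tailPairs_of_conjugate (hpp : 0 < pp) (hP : R.PeriodicFrom pp t)
    (hM : IsCISS G M) (hconj : Conjugate G (R.tailPairs pp t) M) :
    ∃ (R' : G.Ray) (t' : ℕ), R'.PeriodicFrom pp t' ∧ R'.PeriodStart pp t' ∧
      M = R'.tailPairs pp t' ∧
      ∃ (u v : G.DPath) (h1 : v.first = u.last) (h2 : u.first = v.last),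
        R.seg t pp = G.concatPath u v h1 ∧ R'.seg t' pp = G.concatPath v u h2 := by
  obtain ⟨s, hin, hout⟩ := hconj
  have hM0 : GIS.zero ∉ M := fun h0 => ne_zero_of_conj_mem_tailPairs (hout _ h0) rfl
  obtain _ | ⟨a, b, hab⟩ := s
  · exact absurd (hin _ (pair_tail_mem_tailPairs R pp t 0)) hM0
  have ha : a = R.tail a.edges.length := by
    refine eq_tail_of_pair_mul_pair_tail_ne_zero (hab := hab.symm) (Nat.le_succ _) fun h0 => hM0 ?_
    have := hin _ (pair_tail_mem_tailPairs R pp t (a.edges.length + 1))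
    rwa [GIS.inv_pair, h0, GIS.zero_mul] at this
  have hb : b.first = R.vertex a.edges.length := by rw [← hab, ha, tail_first, tail_length]
  have h := agreeAbove_glue R a.edges.length b hb
  have hs : (R.tail a.edges.length).first = ((R.glue _ b hb).tail b.edges.length).first := by
    rw [glue_tail, ← hab, ← ha]
  rw [GIS.pair_congr (h' := hs) ha (glue_tail R _ b hb).symm] at hin hout
  obtain ⟨t', hP', hst, hmin⟩ :=
    ((h.add (t - _)).periodicFrom hP le_add_tsub).exists_periodStart
  exact ⟨_, t', hP', hst, (h.subset_tailPairs hP hs hM hout hmin).antisymm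
    (h.tailPairs_subset hpp hP hP' hs hM hin), h.exists_rotation hpp hP hP'⟩

theorem PeriodicFrom.seg_isCircuit (hpp : 0 < pp) (hP : R.PeriodicFrom pp t) :
    G.IsCircuit (R.seg t pp) ∧ (R.tail t).first = (R.seg t pp).first := by
  have hper : R.vertex t = R.vertex (t + pp) :=
    hP.vertex_congr le_rfl (by omega) ⟨-1, by push_cast; ring⟩
  exact ⟨⟨List.ne_nil_of_length_pos (by simpa using hpp), by rw [seg_last, seg_first, hper]⟩,
    by rw [tail_first, seg_first, hper]⟩

/-- If `p = u v` and `q = v u`, the ray `⋯ q q k` is the ray `⋯ p p d` with `d` replaced by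
`u k`. -/
theorem exists_agreeAbove_of_rotation {p d q k u v : G.DPath} (hpp : 0 < p.edges.length)
    (hd : d.first = p.first) (hk : k.first = q.first) (h1 : v.first = u.last)
    (h2 : u.first = v.last) (hpuv : p = G.concatPath u v h1) (hqvu : q = G.concatPath v u h2)
    (hP : R.PeriodicFrom p.edges.length d.edges.length) (htail : R.tail d.edges.length = d)
    (hseg : R.seg d.edges.length p.edges.length = p) :
    ∃ (R' : G.Ray) (β : ℕ), R.AgreeAbove R' d.edges.length β ∧ k.edges.length ≤ β ∧
      R'.PeriodicFrom p.edges.length k.edges.length ∧ R'.tail k.edges.length = k ∧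
      R'.seg k.edges.length p.edges.length = q := by
  have hpe : p.edges = u.edges ++ v.edges := by rw [hpuv]; rfl
  have hqe : q.edges = v.edges ++ u.edges := by rw [hqvu]; rfl
  have hplen : p.edges.length = u.edges.length + v.edges.length := by simp [hpe]
  have hku : k.first = u.last := by rw [hk, hqvu]; exact h1
  set b := G.concatPath u k hku
  have hbe : b.edges = u.edges ++ k.edges := rfl
  have hblen : b.edges.length = u.edges.length + k.edges.length := by simp [hbe]
  have hb : b.first = R.vertex d.edges.length := by rw [← tail_first, htail, hd, hpuv]; rfl
  have h := agreeAbove_glue R _ _ hb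
  set R' := R.glue _ _ hb
  have hRuv : R.segEdges (d.edges.length + v.edges.length) u.edges.length = u.edges ∧
      R.segEdges d.edges.length v.edges.length = v.edges := by
    have := congrArg DPath.edges hseg
    rw [seg_edges, hplen, hpe, Nat.add_comm, segEdges_add] at this
    exact List.append_inj this (by simp)
  have hR'uk : R'.segEdges k.edges.length u.edges.length = u.edges ∧
      R'.segEdges 0 k.edges.length = k.edges := by
    have := glue_segEdges_zero R _ _ hb
    rw [hblen, hbe, Nat.add_comm, segEdges_add, Nat.zero_add] at this
    exact List.append_inj this (by simp)
  have hP' : R'.PeriodicFrom p.edges.length k.edges.length :=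
    (h.extend hP le_rfl (γ := k.edges.length) (c := d.edges.length + v.edges.length)
      (by omega) (by omega)
      (by rw [hblen, show u.edges.length + k.edges.length - k.edges.length = u.edges.length
        by omega, hR'uk.1, hRuv.1])
      ⟨1, by omega⟩).periodicFrom hP (by omega)
  have hktail : R'.tail k.edges.length = k := by
    have hks : k.IsSuffixOf (R'.tail b.edges.length) := by
      rw [glue_tail]
      exact ⟨u.edges, rfl, hku⟩
    exact (eq_tail_of_isSuffixOf hks).1.symm
  have hqseg : R'.seg k.edges.length p.edges.length = q := by
    refine DPath.ext_of_edges_eq ?_ (List.ne_nil_of_length_pos (by simpa using hpp))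
    have hv := h.segEdges_eq 0 v.edges.length
    rw [Nat.add_zero, Nat.add_zero, hblen, Nat.add_comm] at hv
    rw [seg_edges, hplen, segEdges_add, hR'uk.1, hv, hRuv.2, hqe]
  exact ⟨R', _, h, by omega, hP', hktail, hqseg⟩

end Ray

open Ray

theorem exists_cycleSet_eq_of_conjugate {p d : G.DPath} (hp : G.IsCircuit p)
    (hd : d.first = p.first) {M : Set (GIS G)} (hM : IsCISS G M)
    (hconj : Conjugate G (cycleSet G p d) M) :
    ∃ q k : G.DPath, G.IsCircuit q ∧ k.first = q.first ∧ G.NoCommonPrefix q k ∧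
      M = cycleSet G q k := by
  have hpp : 0 < p.edges.length := List.length_pos_iff.2 hp.1
  obtain ⟨R, hP, htail, hseg⟩ := exists_ray_of_circuit p d hp.1 hp.2 hd
  rw [cycleSet_eq_tailPairs hpp hP hseg htail] at hconj
  obtain ⟨R', t', hP', hst, rfl, -⟩ := exists_eq_tailPairs_of_conjugate hpp hP hM hconj
  exact ⟨_, _, (hP'.seg_isCircuit hpp).1, (hP'.seg_isCircuit hpp).2,
    (noCommonPrefix_iff_periodStart hpp).2 hst, (cycleSet_eq_tailPairs hpp hP' rfl rfl).symm⟩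

theorem exists_rotation_of_conjugate_cycleSet {p d q k : G.DPath} (hp : G.IsCircuit p)
    (hd : d.first = p.first) (hq : G.IsCircuit q) (hk : k.first = q.first)
    (hqk : G.NoCommonPrefix q k) (hconj : Conjugate G (cycleSet G p d) (cycleSet G q k)) :
    ∃ (u v : G.DPath) (h1 : v.first = u.last) (h2 : u.first = v.last),
      p = G.concatPath u v h1 ∧ q = G.concatPath v u h2 := by
  have hpp : 0 < p.edges.length := List.length_pos_iff.2 hp.1
  have hqq : 0 < q.edges.length := List.length_pos_iff.2 hq.1
  obtain ⟨R, hP, htail, hseg⟩ := exists_ray_of_circuit p d hp.1 hp.2 hd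
  obtain ⟨S, hS, htailS, hsegS⟩ := exists_ray_of_circuit q k hq.1 hq.2 hk
  have hst : S.PeriodStart q.edges.length k.edges.length :=
    (noCommonPrefix_iff_periodStart hqq).1 (by rwa [hsegS, htailS])
  rw [cycleSet_eq_tailPairs hpp hP hseg htail, cycleSet_eq_tailPairs hqq hS hsegS htailS] at hconj
  obtain ⟨R', t', hP', -, hSR', u, v, h1, h2, hpuv, hR'vu⟩ :=
    exists_eq_tailPairs_of_conjugate hpp hP (isCISS_tailPairs hS hst) hconj
  obtain ⟨hqp, rfl, htails⟩ := eq_of_tailPairs_eq hqq hpp hS hP' hSR'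
  refine ⟨u, v, h1, h2, hseg ▸ hpuv, ?_⟩
  rw [← hsegS, seg_eq_of_tail_eq htails, hqp, hR'vu]

theorem conjugate_cycleSet_of_rotation {p d q k u v : G.DPath} (hp : G.IsCircuit p)
    (hd : d.first = p.first) (hk : k.first = q.first) (h1 : v.first = u.last)
    (h2 : u.first = v.last) (hpuv : p = G.concatPath u v h1) (hqvu : q = G.concatPath v u h2) :
    Conjugate G (cycleSet G p d) (cycleSet G q k) := by
  have hpp : 0 < p.edges.length := List.length_pos_iff.2 hp.1
  obtain ⟨R, hP, htail, hseg⟩ := exists_ray_of_circuit p d hp.1 hp.2 hd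
  obtain ⟨R', β, h, hkβ, hP', hktail, hqseg⟩ :=
    exists_agreeAbove_of_rotation hpp hd hk h1 h2 hpuv hqvu hP htail hseg
  have hs : (R.tail d.edges.length).first = (R'.tail β).first := by
    simpa using (h.vertex_eq 0).symm
  rw [cycleSet_eq_tailPairs hpp hP hseg htail, cycleSet_eq_tailPairs hpp hP' hqseg hktail]
  exact ⟨GIS.pair (R.tail _) (R'.tail _) hs, fun x hx => h.conj_mem_tailPairs hkβ hs hx,
    fun y hy => h.conj_inv_mem_tailPairs hP' hkβ hs hy⟩

end DGraph

theorem stmt_13_general (G : DGraph) :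
    (∀ p d : G.DPath, G.IsCircuit p → d.first = p.first → G.NoCommonPrefix p d →
      ∀ M : Set (GIS G), IsCISS G M → Conjugate G (cycleSet G p d) M →
        ∃ q k : G.DPath, G.IsCircuit q ∧ k.first = q.first ∧ G.NoCommonPrefix q k ∧
          M = cycleSet G q k) ∧
    (∀ p d q k : G.DPath, G.IsCircuit p → d.first = p.first → G.NoCommonPrefix p d →
      G.IsCircuit q → k.first = q.first → G.NoCommonPrefix q k →
      (Conjugate G (cycleSet G p d) (cycleSet G q k) ↔
        ∃ (u v : G.DPath) (h1 : v.first = u.last) (h2 : u.first = v.last),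
          p = G.concatPath u v h1 ∧ q = G.concatPath v u h2)) :=
  ⟨fun _ _ hp hd _ _ hM hconj => DGraph.exists_cycleSet_eq_of_conjugate hp hd hM hconj,
    fun _ _ _ _ hp hd _ hq hk hqk =>
      ⟨DGraph.exists_rotation_of_conjugate_cycleSet hp hd hq hk hqk,
        fun ⟨_, _, h1, h2, hpuv, hqvu⟩ =>
          DGraph.conjugate_cycleSet_of_rotation hp hd hk h1 h2 hpuv hqvu⟩⟩

/-- any closed inverse subsemigroup conjugate to one of cycle type is
of cycle type, and `L_{p,d}` and `L_{q,k}` are conjugate iff `p` and `q` are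
conjugate paths (`p = uv` and `q = vu`). -/
theorem stmt_13 (G : DGraph) [Fintype G.V] [Fintype G.E] :
    (∀ p d : G.DPath, G.IsCircuit p → d.first = p.first → G.NoCommonPrefix p d →
      ∀ M : Set (GIS G), IsCISS G M → Conjugate G (cycleSet G p d) M →
        ∃ q k : G.DPath, G.IsCircuit q ∧ k.first = q.first ∧ G.NoCommonPrefix q k ∧
          M = cycleSet G q k) ∧
    (∀ p d q k : G.DPath, G.IsCircuit p → d.first = p.first → G.NoCommonPrefix p d →
      G.IsCircuit q → k.first = q.first → G.NoCommonPrefix q k →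
      (Conjugate G (cycleSet G p d) (cycleSet G q k) ↔
        ∃ (u v : G.DPath) (h1 : v.first = u.last) (h2 : u.first = v.last),
          p = G.concatPath u v h1 ∧ q = G.concatPath v u h2)) :=
  stmt_13_general G
end

section
/- Let Γ be a finite directed graph and let L be a closed inverse subsemigroup of S(Γ) of infinite chain type. Then L has infinite index in S(Γ): there are infinitely many distinct right cosets of L. -/
/-! In the graph inverse semigroup, `(a, b) ↦ |a| - |b|` is additive on nonzero products,
so it vanishes on nonzero idempotents and is constant on the up-set of any nonzero element.
If `0 ∈ L`, then `L` is everything, which is infinite and so (the vertex set being finite)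
contains a non-idempotent `(a, b)` with `a ≠ b`. Otherwise `L` is an infinite chain of
idempotents `(r, r)`, and the coset of `(r, ε)` consists of elements `(a, b)` with
`|a| - |b| = |r|`; two paths of a chain with equal length coincide, so these cosets are distinct. -/

namespace DGraph.DPath

variable {G : DGraph}

theorem IsSuffixOf.length_le_s16 {q p : G.DPath} (h : q.IsSuffixOf p) :
    q.edges.length ≤ p.edges.length := by
  obtain ⟨l, hl, -⟩ := h
  simp [hl]

theorem IsSuffixOf.eq_of_length_eq {q p : G.DPath} (h : q.IsSuffixOf p)
    (hl : q.edges.length = p.edges.length) : q = p := by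
  obtain ⟨l, hle, hf⟩ := h
  obtain rfl : l = [] := by
    rw [← List.length_eq_zero_iff]
    have := congrArg List.length hle
    simp only [List.length_append] at this
    omega
  exact ext (by simpa using hf) (by simpa using hle.symm)

end DGraph.DPath

namespace GIS

variable {G : DGraph}

open scoped Classical in
theorem pair_mul_pair (t u v w : G.DPath) (h1 : t.first = u.first) (h2 : v.first = w.first) :
    (pair t u h1 : GIS G) * pair v w h2 =
      if hs : v.IsSuffixOf u then
        .pair t ⟨t.first, u.edges.take (u.edges.length - v.edges.length) ++ w.edges,
          by rw [h1]; exact G.isWalk_chopAppend hs h2⟩ rfl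
      else if hs' : u.IsSuffixOf v then
        .pair ⟨v.first, v.edges.take (v.edges.length - u.edges.length) ++ t.edges,
          G.isWalk_chopAppend hs' h1.symm⟩ w h2
      else .zero := rfl

theorem pair_mul_pair_ne_zero {t u v w : G.DPath} (h1 : t.first = u.first)
    (h2 : v.first = w.first) (h : v.IsSuffixOf u ∨ u.IsSuffixOf v) :
    (pair t u h1 : GIS G) * pair v w h2 ≠ zero := by
  rw [pair_mul_pair]
  split_ifs with hvu huv
  · rintro ⟨⟩
  · rintro ⟨⟩
  · exact (h.elim hvu huv).elim

theorem eq_of_pair_mul_pair_eq_pair {t u v w c d : G.DPath} {h1 : t.first = u.first}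
    {h2 : v.first = w.first} {h : c.first = d.first}
    (he : (pair t u h1 : GIS G) * pair v w h2 = pair c d h) :
    (v.IsSuffixOf u ∧ c = t) ∨ (u.IsSuffixOf v ∧ d = w) := by
  rw [pair_mul_pair] at he
  split_ifs at he with hvu huv
  · injection he with hc; exact .inl ⟨hvu, hc.symm⟩
  · injection he with _ hd; exact .inr ⟨huv, hd.symm⟩

-- The value at `zero` is junk.
def lenDiff : GIS G → ℤ
  | zero => 0
  | pair a b _ => (a.edges.length : ℤ) - b.edges.length

theorem lenDiff_mul {x y : GIS G} (h : x * y ≠ zero) :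
    lenDiff (x * y) = lenDiff x + lenDiff y := by
  cases x with
  | zero => exact absurd rfl h
  | pair t u h1 =>
    cases y with
    | zero => exact absurd rfl h
    | pair v w h2 =>
      rw [pair_mul_pair] at h ⊢
      split_ifs at h ⊢ with hvu huv
      · have := hvu.length_le_s16
        simp only [lenDiff, List.length_append, List.length_take]
        omega
      · have := huv.length_le_s16
        simp only [lenDiff, List.length_append, List.length_take]
        omega
      · exact absurd rfl h

theorem lenDiff_eq_zero_of_mul_self {e : GIS G} (he : e * e = e) (h0 : e ≠ zero) :
    lenDiff e = 0 := by
  have hee : e * e ≠ zero := by rwa [he]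
  have := lenDiff_mul hee
  rw [he] at this
  omega

theorem lenDiff_eq_of_le {x y : GIS G} (hle : le x y) (hx : x ≠ zero) :
    lenDiff x = lenDiff y := by
  obtain ⟨e, he, rfl⟩ := hle
  have he0 : e ≠ zero := by rintro rfl; exact hx rfl
  rw [lenDiff_mul hx, lenDiff_eq_zero_of_mul_self he he0, zero_add]

theorem eq_of_pair_mul_self_s16 {a b : G.DPath} {h : a.first = b.first}
    (he : (pair a b h : GIS G) * pair a b h = pair a b h) : a = b := by
  have hlen := lenDiff_eq_zero_of_mul_self he (by rintro ⟨⟩)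
  simp only [lenDiff, sub_eq_zero, Nat.cast_inj] at hlen
  rcases eq_of_pair_mul_pair_eq_pair he with ⟨hab, -⟩ | ⟨hba, -⟩
  · exact hab.eq_of_length_eq hlen
  · exact (hba.eq_of_length_eq hlen.symm).symm

theorem isSuffixOf_of_le_pair_pair {q r : G.DPath}
    (h : le (pair q q rfl : GIS G) (pair r r rfl)) : r.IsSuffixOf q := by
  obtain ⟨e, he, hqe⟩ := h
  cases e with
  | zero => cases hqe
  | pair a b hab =>
    obtain rfl : a = b := eq_of_pair_mul_self_s16 he
    rcases eq_of_pair_mul_pair_eq_pair hqe.symm with ⟨hra, rfl⟩ | ⟨-, rfl⟩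
    · exact hra
    · exact .refl _

def ofPath (r : G.DPath) : GIS G := pair r ⟨r.first, [], trivial⟩ rfl

theorem lenDiff_ofPath (r : G.DPath) : lenDiff (ofPath r) = r.edges.length := by
  simp [ofPath, lenDiff]

theorem ofPath_mul_inv (r : G.DPath) : ofPath r * (ofPath r).inv = pair r r rfl := by
  rw [ofPath, inv, pair_mul_pair, dif_pos (.refl _)]
  congr 1

def toOption : GIS G → Option (G.DPath × G.DPath)
  | zero => none
  | pair a b _ => some (a, b)

theorem toOption_injective : Function.Injective (toOption (G := G)) := by
  rintro (_ | ⟨a, b, _⟩) (_ | ⟨c, d, _⟩) h <;> simp only [toOption, reduceCtorEq] at h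
  · rfl
  · obtain ⟨rfl, rfl⟩ := Prod.mk.inj (Option.some.inj h)
    rfl

theorem exists_mul_self_ne [Finite G.V] [Infinite (GIS G)] : ∃ x : GIS G, x * x ≠ x := by
  have : Infinite G.DPath := by
    by_contra hfin
    rw [not_infinite_iff_finite] at hfin
    have := Finite.of_injective _ (toOption_injective (G := G))
    exact not_finite (GIS G)
  obtain ⟨a, b, hne, hab⟩ := Finite.exists_ne_map_eq_of_infinite (DGraph.DPath.first (G := G))
  exact ⟨pair a b hab, fun he => hne (eq_of_pair_mul_self_s16 he)⟩

end GIS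

open GIS

variable {G : DGraph} {L : Set (GIS G)}

def rightCoset (L : Set (GIS G)) (t : GIS G) : Set (GIS G) := {s | ∃ x ∈ L, le (x * t) s}

theorem IsCISS.eq_univ_of_zero_mem (hL : IsCISS G L) (h0 : zero ∈ L) : L = Set.univ :=
  Set.eq_univ_of_forall fun s => hL.2.2.2 _ h0 s ⟨zero, rfl, rfl⟩

namespace IsChainOfIdem

theorem exists_eq_pair (hch : IsChainOfIdem G L) (h0 : zero ∉ L) {x : GIS G} (hx : x ∈ L) :
    ∃ r : G.DPath, x = pair r r rfl := by
  cases x with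
  | zero => exact absurd hx h0
  | pair a b hab =>
    obtain rfl : a = b := eq_of_pair_mul_self_s16 (hch.1 _ hx)
    exact ⟨a, rfl⟩

theorem isSuffixOf_or (hch : IsChainOfIdem G L) {q r : G.DPath}
    (hq : pair q q rfl ∈ L) (hr : pair r r rfl ∈ L) : q.IsSuffixOf r ∨ r.IsSuffixOf q :=
  (hch.2 _ hq _ hr).imp isSuffixOf_of_le_pair_pair isSuffixOf_of_le_pair_pair |>.symm

theorem infinite_diag (hch : IsChainOfIdem G L) (h0 : zero ∉ L) (hinf : L.Infinite) :
    {r : G.DPath | pair r r rfl ∈ L}.Infinite := by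
  refine Set.Infinite.of_image (fun r => pair r r rfl) (hinf.mono fun x hx => ?_)
  obtain ⟨r, rfl⟩ := hch.exists_eq_pair h0 hx
  exact ⟨r, hx, rfl⟩

theorem lenDiff_of_mem_rightCoset (hch : IsChainOfIdem G L) (h0 : zero ∉ L) {r : G.DPath}
    (hr : pair r r rfl ∈ L) {s : GIS G} (hs : s ∈ rightCoset L (ofPath r)) :
    lenDiff s = r.edges.length := by
  obtain ⟨x, hx, hle⟩ := hs
  obtain ⟨q, rfl⟩ := hch.exists_eq_pair h0 hx
  have hne : pair q q rfl * ofPath r ≠ zero := by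
    rw [ofPath]; exact pair_mul_pair_ne_zero _ _ (hch.isSuffixOf_or hr hx)
  have hq := lenDiff_eq_zero_of_mul_self (hch.1 _ hx) (by rintro ⟨⟩)
  rw [← lenDiff_eq_of_le hle hne, lenDiff_mul hne, hq, lenDiff_ofPath, zero_add]

theorem injOn_rightCoset_ofPath (hch : IsChainOfIdem G L) (h0 : zero ∉ L) :
    {r : G.DPath | pair r r rfl ∈ L}.InjOn (fun r => rightCoset L (ofPath r)) := by
  intro q hq r hr (hqr : rightCoset L (ofPath q) = rightCoset L (ofPath r))
  have hmem : ofPath r ∈ rightCoset L (ofPath q) :=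
    hqr ▸ ⟨pair r r rfl, hr, ⟨pair r r rfl, hch.1 _ hr, rfl⟩⟩
  have hlen := hch.lenDiff_of_mem_rightCoset h0 hq hmem
  rw [lenDiff_ofPath, Nat.cast_inj] at hlen
  rcases hch.isSuffixOf_or hq hr with h | h
  · exact h.eq_of_length_eq hlen.symm
  · exact (h.eq_of_length_eq hlen).symm

end IsChainOfIdem

theorem stmt_16_general (G : DGraph) [Fintype G.V] (L : Set (GIS G))
    (hL : IsCISS G L) (hch : IsChainOfIdem G L) (hinf : L.Infinite) :
    (cosets G L).Infinite := by
  have h0 : zero ∉ L := by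
    intro h0
    have hL_univ := hL.eq_univ_of_zero_mem h0
    have : Infinite (GIS G) := Set.infinite_univ_iff.mp (hL_univ ▸ hinf)
    obtain ⟨x, hx⟩ := exists_mul_self_ne (G := G)
    exact hx (hch.1 x (hL_univ ▸ Set.mem_univ x))
  refine Set.infinite_of_injOn_mapsTo (hch.injOn_rightCoset_ofPath h0) ?_
    (hch.infinite_diag h0 hinf)
  intro r hr
  exact ⟨ofPath r, (ofPath_mul_inv r).symm ▸ hr, rfl⟩

/-- a closed inverse subsemigroup of infinite chain type has infinite
index in `S(Γ)`. -/
theorem stmt_16 (G : DGraph) [Fintype G.V] [Fintype G.E] (L : Set (GIS G))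
    (hL : IsCISS G L) (hch : IsChainOfIdem G L) (hinf : L.Infinite) :
    (cosets G L).Infinite :=
  stmt_16_general G L hL hch hinf
end

section
/- Let Γ be a finite directed graph containing an edge a that is a directed circuit of length one (a loop), let m ≥ 1, and let L = L_{a^m,d} be the corresponding closed inverse subsemigroup of cycle type in S(Γ). If there exists a directed circuit c in Γ containing an edge e ≠ a, together with a (possibly empty) directed path g from some vertex v₀ of d to a vertex of c such that g has no edge in common with c or with d, then L has infinite index in S(Γ). -/
section StmtAux
open DGraph
variable {G : DGraph}

theorem StmtAux.walkEnd_append (v : G.V) (l1 l2 : List G.E) :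
    G.walkEnd v (l1 ++ l2) = G.walkEnd (G.walkEnd v l1) l2 := by
  induction l1 generalizing v with
  | nil => rfl
  | cons e l ih => simp [ih]

open scoped Classical in
theorem StmtAux.mul_pair_pair (t u v w : G.DPath) (h1 : t.first = u.first) (h2 : v.first = w.first) :
    GIS.pair t u h1 * GIS.pair v w h2 =
      if hs : v.IsSuffixOf u then
        GIS.pair t ⟨t.first, u.edges.take (u.edges.length - v.edges.length) ++ w.edges,
          by rw [h1]; exact G.isWalk_chopAppend hs h2⟩ rfl
      else if hs' : u.IsSuffixOf v then
        GIS.pair ⟨v.first, v.edges.take (v.edges.length - u.edges.length) ++ t.edges,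
          G.isWalk_chopAppend hs' h1.symm⟩ w h2
      else GIS.zero := rfl

theorem StmtAux.zero_mul (x : GIS G) : GIS.zero * x = GIS.zero := rfl

theorem StmtAux.pair_inj {a b a' b' : G.DPath} {h : a.first = b.first} {h' : a'.first = b'.first}
    (heq : GIS.pair a b h = GIS.pair a' b' h') : a = a' ∧ b = b' := by
  injection heq with h1 h2
  exact ⟨h1, h2⟩

theorem StmtAux.DPath.ext' {p q : G.DPath} (h1 : p.first = q.first) (h2 : p.edges = q.edges) : p = q := by
  cases p; cases q; simp_all

theorem StmtAux.count_flatten_replicate [DecidableEq G.E] (e : G.E) (n : ℕ) (l : List G.E) :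
    ((List.replicate n l).flatten.count e) = n * l.count e := by
  induction n with
  | zero => simp
  | succ k ih => simp [List.replicate_succ, List.count_append, ih, Nat.succ_mul]; ring

theorem StmtAux.isWalk_flatten_replicate (v : G.V) (l : List G.E) (hw : G.IsWalk v l)
    (hend : G.walkEnd v l = v) (n : ℕ) :
    G.IsWalk v (List.replicate n l).flatten ∧ G.walkEnd v (List.replicate n l).flatten = v := by
  induction n with
  | zero => simp
  | succ k ih =>
    rw [List.replicate_succ, List.flatten_cons]
    refine ⟨?_, ?_⟩
    · rw [G.isWalk_append]; exact ⟨hw, by rw [hend]; exact ih.1⟩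
    · rw [StmtAux.walkEnd_append, hend, ih.2]

theorem StmtAux.exists_take_of_mem_vertexList {p : G.DPath} {v : G.V} (h : v ∈ p.vertexList) :
    ∃ i ≤ p.edges.length, v = G.walkEnd p.first (p.edges.take i) := by
  have key : ∀ (l : List G.E) (v0 : G.V), v ∈ v0 :: l.map G.tgt →
      ∃ i ≤ l.length, v = G.walkEnd v0 (l.take i) := by
    intro l
    induction l with
    | nil => intro v0 h; simp at h; exact ⟨0, by simp, by simp [h]⟩
    | cons f l ih =>
      intro v0 h
      rcases List.mem_cons.1 h with h | h
      · exact ⟨0, by simp, by simp [h]⟩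
      · obtain ⟨i, hi, hv⟩ := ih (G.tgt f) h
        exact ⟨i + 1, by simpa using hi, by simpa using hv⟩
  exact key p.edges p.first h

theorem StmtAux.walkEnd_all_a {a : G.E} (ha : G.tgt a = G.src a) :
    ∀ (l : List G.E), (∀ f ∈ l, f = a) → l ≠ [] → ∀ u, G.walkEnd u l = G.src a := by
  intro l
  induction l with
  | nil => simp
  | cons f r ih =>
    intro hall _ u
    have hf : f = a := hall f (by simp)
    rcases eq_or_ne r [] with hr | hr
    · subst hr; simp [hf, ha]
    · simp [ih (fun x hx => hall x (by simp [hx])) hr]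

theorem StmtAux.walkEnd_src_a {a : G.E} (ha : G.tgt a = G.src a)
    (l : List G.E) (hall : ∀ f ∈ l, f = a) : G.walkEnd (G.src a) l = G.src a := by
  rcases eq_or_ne l [] with hl | hl
  · simp [hl]
  · exact StmtAux.walkEnd_all_a ha l hall hl _

theorem StmtAux.suffix_loopPow {a : G.E} {ha : G.tgt a = G.src a} {m : ℕ}
    {v : G.DPath} (hv : v.IsSuffixOf (G.loopPow a ha m)) :
    (∀ f ∈ v.edges, f = a) ∧ v.first = G.src a := by
  obtain ⟨l, hl, hfst⟩ := hv
  have hl' : List.replicate m a = l ++ v.edges := hl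
  have hmemall : ∀ f ∈ l ++ v.edges, f = a := by
    intro f hf
    exact List.eq_of_mem_replicate (by rw [hl']; exact hf)
  constructor
  · exact fun f hf => hmemall f (List.mem_append_right _ hf)
  · rw [hfst]
    show G.walkEnd (G.src a) l = G.src a
    exact StmtAux.walkEnd_src_a ha l (fun f hf => hmemall f (List.mem_append_left _ hf))

theorem StmtAux.powEdges_all_a {a : G.E} {ha : G.tgt a = G.src a} {m : ℕ} (s : ℕ) :
    ∀ f ∈ powEdges (G.loopPow a ha m) s, f = a := by
  intro f hf
  rw [powEdges, List.mem_flatten] at hf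
  obtain ⟨L, hL, hfL⟩ := hf
  have := List.eq_of_mem_replicate hL
  subst this
  exact List.eq_of_mem_replicate hfL
theorem StmtAux.prod_left {a : G.E} {ha : G.tgt a = G.src a} {m : ℕ}
    {d : G.DPath} (hd : d.first = G.src a) {x : GIS G}
    (hx : x ∈ cycleSet G (G.loopPow a ha m) d)
    (β : G.DPath) (hβ : d.first = β.first) :
    ∃ (u w : G.DPath) (hw : u.first = w.first) (Wl : List G.E),
      x * GIS.pair d β hβ = GIS.pair u w hw ∧ w.edges = Wl ++ β.edges ∧
      ∀ f ∈ Wl, f = a := by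
  rcases hx with ⟨r, s, v, b1, b2, hb, hsuf, hxeq, hb1f, hb1e, hb2f, hb2e⟩ | ⟨q, hq, hxeq⟩
  · subst hxeq
    obtain ⟨hva, hvf⟩ := StmtAux.suffix_loopPow hsuf
    have halla : ∀ f ∈ v.edges ++ powEdges (G.loopPow a ha m) s, f = a := by
      intro f hf
      rcases List.mem_append.1 hf with hf | hf
      · exact hva f hf
      · exact StmtAux.powEdges_all_a s f hf
    have hdsuff : d.IsSuffixOf b2 := by
      refine ⟨v.edges ++ powEdges (G.loopPow a ha m) s, hb2e, ?_⟩
      rw [hb2f, hvf, StmtAux.walkEnd_src_a ha _ halla, hd]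
    rw [StmtAux.mul_pair_pair, dif_pos hdsuff]
    refine ⟨_, _, ?hw, b2.edges.take (b2.edges.length - d.edges.length), rfl, rfl, ?_⟩
    case hw => rfl
    intro f hf
    rw [hb2e] at hf
    have hlen : (v.edges ++ powEdges (G.loopPow a ha m) s ++ d.edges).length - d.edges.length
        = (v.edges ++ powEdges (G.loopPow a ha m) s).length := by simp; omega
    rw [hlen, List.take_left] at hf
    exact halla f hf
  · subst hxeq
    rw [StmtAux.mul_pair_pair]
    by_cases h1 : d.IsSuffixOf q
    · rw [dif_pos h1]
      refine ⟨_, _, ?hw2, q.edges.take (q.edges.length - d.edges.length), rfl, rfl, ?_⟩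
      case hw2 => rfl
      obtain ⟨l, hl, -⟩ := hq
      have : q.edges.length ≤ d.edges.length := by rw [hl]; simp
      rw [Nat.sub_eq_zero_of_le this, List.take_zero]
      intro f hf; simp at hf
    · rw [dif_neg h1, dif_pos hq]
      refine ⟨_, _, ?hw3, [], rfl, (List.nil_append _).symm, by intro f hf; simp at hf⟩
      case hw3 => exact hβ

theorem StmtAux.prod_right {d β : G.DPath} (hβ : d.first = β.first) (ε : GIS G) :
    ε * GIS.pair d β hβ = GIS.zero ∨
    ∃ (u w : G.DPath) (hw : u.first = w.first) (Xl : List G.E),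
      ε * GIS.pair d β hβ = GIS.pair u w hw ∧ w.edges = Xl ++ β.edges := by
  cases ε with
  | zero => left; rfl
  | pair q1 q2 hq =>
    rw [StmtAux.mul_pair_pair]
    by_cases h1 : d.IsSuffixOf q2
    · rw [dif_pos h1]
      right
      refine ⟨_, _, ?hw4, q2.edges.take (q2.edges.length - d.edges.length), rfl, rfl⟩
      case hw4 => rfl
    · rw [dif_neg h1]
      by_cases h2 : q2.IsSuffixOf d
      · rw [dif_pos h2]
        right
        refine ⟨_, _, ?hw5, [], rfl, (List.nil_append _).symm⟩
        case hw5 => exact hβ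
      · rw [dif_neg h2]; left; rfl
theorem StmtAux.pair_congr {a b b' : G.DPath} (h : a.first = b.first) (h' : a.first = b'.first)
    (e2 : b = b') : GIS.pair a b h = GIS.pair a b' h' := by cases e2; rfl

theorem StmtAux.dd_mul {d u : G.DPath} (h : d.first = u.first) :
    GIS.pair d d rfl * GIS.pair d u h = GIS.pair d u h := by
  have hsuff : d.IsSuffixOf d := ⟨[], rfl, rfl⟩
  rw [StmtAux.mul_pair_pair, dif_pos hsuff]
  exact StmtAux.pair_congr _ _ (StmtAux.DPath.ext' h (by simp))

theorem StmtAux.pair_mul_inv {d β : G.DPath} (h : d.first = β.first) :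
    GIS.pair d β h * (GIS.pair d β h).inv = GIS.pair d d rfl := by
  have hsuff : β.IsSuffixOf β := ⟨[], rfl, rfl⟩
  show GIS.pair d β h * GIS.pair β d h.symm = _
  rw [StmtAux.mul_pair_pair, dif_pos hsuff]
  exact StmtAux.pair_congr _ _ (StmtAux.DPath.ext' rfl (by simp))
end StmtAux
/-- for a loop `a`, the cycle type subsemigroup `L_{a^m,d}` has
infinite index if there is a directed circuit `c` containing an edge `e ≠ a` and a
(possibly empty) path `g` from a vertex of `d` to a vertex of `c` having no edge in
common with `c` or with `d`. -/
theorem stmt_18 (G : DGraph) [Fintype G.V] [Fintype G.E]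
    (a : G.E) (ha : G.tgt a = G.src a) (m : ℕ) (hm : 1 ≤ m)
    (d : G.DPath) (hd : d.first = G.src a)
    (hpre : G.NoCommonPrefix (G.loopPow a ha m) d)
    (c : G.DPath) (hc : G.IsCircuit c) (e : G.E) (he : e ∈ c.edges) (hea : e ≠ a)
    (g : G.DPath) (hg1 : g.first ∈ d.vertexList) (hg2 : g.last ∈ c.vertexList)
    (hg3 : ∀ f ∈ g.edges, f ∉ c.edges ∧ f ∉ d.edges) :
    (cosets G (cycleSet G (G.loopPow a ha m) d)).Infinite := by
  classical
  obtain ⟨i, hi, hgf⟩ := StmtAux.exists_take_of_mem_vertexList hg1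
  obtain ⟨j, hj, hgl⟩ := StmtAux.exists_take_of_mem_vertexList hg2
  set ce : List G.E := c.edges.drop j ++ c.edges.take j with hce
  have hcw : G.IsWalk c.first (c.edges.take j) ∧
      G.IsWalk (G.walkEnd c.first (c.edges.take j)) (c.edges.drop j) :=
    (G.isWalk_append c.first (c.edges.take j) (c.edges.drop j)).mp
      (by rw [List.take_append_drop]; exact c.wf)
  have hcend : G.walkEnd c.first c.edges = c.first := hc.2
  have hdropend : G.walkEnd (G.walkEnd c.first (c.edges.take j)) (c.edges.drop j) = c.first := by
    rw [← StmtAux.walkEnd_append, List.take_append_drop]; exact hcend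
  have hcewalk : G.IsWalk g.last ce := by
    rw [hgl, hce, G.isWalk_append]
    exact ⟨hcw.2, by rw [hdropend]; exact hcw.1⟩
  have hceend : G.walkEnd g.last ce = g.last := by
    rw [hgl, hce, StmtAux.walkEnd_append, hdropend]
  have hcecnt : 0 < ce.count e := by
    have h1 : ce.count e = c.edges.count e := by
      rw [hce, List.count_append, Nat.add_comm, ← List.count_append, List.take_append_drop]
    rw [h1]
    exact List.count_pos_iff.mpr he
  have hdtake : G.IsWalk d.first (d.edges.take i) :=
    ((G.isWalk_append d.first _ _).mp (by rw [List.take_append_drop]; exact d.wf)).1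
  have hβwalk : ∀ n : ℕ,
      G.IsWalk d.first (d.edges.take i ++ g.edges ++ (List.replicate n ce).flatten) := by
    intro n
    rw [G.isWalk_append, G.isWalk_append]
    refine ⟨⟨hdtake, ?_⟩, ?_⟩
    · rw [← hgf]; exact g.wf
    · rw [StmtAux.walkEnd_append, ← hgf]
      have hgend : G.walkEnd g.first g.edges = g.last := rfl
      rw [hgend]
      exact (StmtAux.isWalk_flatten_replicate g.last ce hcewalk hceend n).1
  set β : ℕ → G.DPath := fun n =>
    ⟨d.first, d.edges.take i ++ g.edges ++ (List.replicate n ce).flatten, hβwalk n⟩ with hβ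
  have hβfirst : ∀ n, d.first = (β n).first := fun n => rfl
  have hcount : ∀ n : ℕ,
      (β n).edges.count e = (d.edges.take i ++ g.edges).count e + n * ce.count e := by
    intro n
    show (d.edges.take i ++ g.edges ++ (List.replicate n ce).flatten).count e = _
    rw [List.count_append, StmtAux.count_flatten_replicate]
  have hLd : GIS.pair d d rfl ∈ cycleSet G (G.loopPow a ha m) d :=
    Or.inr ⟨d, ⟨[], rfl, rfl⟩, rfl⟩
  have hkey : ∀ n k : ℕ,
      (∃ x ∈ cycleSet G (G.loopPow a ha m) d,
        GIS.le (x * GIS.pair d (β n) (hβfirst n)) (GIS.pair d (β k) (hβfirst k))) → k ≤ n := by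
    rintro n k ⟨x, hxL, ε, hεid, heq⟩
    obtain ⟨u, w, hw, Wl, hA, hwE, hWa⟩ := StmtAux.prod_left hd hxL (β n) (hβfirst n)
    rcases StmtAux.prod_right (hβfirst k) ε with h0 | ⟨u', w', hw', Xl, hB, hw'E⟩
    · rw [hA, h0] at heq
      simp at heq
    · rw [hA, hB] at heq
      obtain ⟨-, hww⟩ := StmtAux.pair_inj heq
      have hl : Wl ++ (β n).edges = Xl ++ (β k).edges := by
        rw [← hwE, ← hw'E, hww]
      have hcW : Wl.count e = 0 :=
        List.count_eq_zero.mpr (fun hf => hea (hWa e hf))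
      have hcc := congrArg (List.count e) hl
      have hbn : (β n).edges = d.edges.take i ++ g.edges ++ (List.replicate n ce).flatten := rfl
      have hbk : (β k).edges = d.edges.take i ++ g.edges ++ (List.replicate k ce).flatten := rfl
      rw [hbn, hbk] at hcc
      simp only [List.count_append, StmtAux.count_flatten_replicate, hcW] at hcc
      have h2 : k * ce.count e ≤ n * ce.count e := by linarith
      exact Nat.le_of_mul_le_mul_right h2 hcecnt
  have hCle : ∀ n : ℕ, GIS.le (GIS.pair d (β n) (hβfirst n)) (GIS.pair d (β n) (hβfirst n)) :=
    fun n => ⟨GIS.pair d d rfl, StmtAux.dd_mul rfl, (StmtAux.dd_mul (hβfirst n)).symm⟩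
  refine Set.infinite_of_injective_forall_mem
    (f := fun n : ℕ => {s | ∃ x ∈ cycleSet G (G.loopPow a ha m) d,
      GIS.le (x * GIS.pair d (β n) (hβfirst n)) s}) ?_ ?_
  · intro n k hnk
    have h1 : GIS.pair d (β k) (hβfirst k) ∈ {s | ∃ x ∈ cycleSet G (G.loopPow a ha m) d,
        GIS.le (x * GIS.pair d (β k) (hβfirst k)) s} :=
      ⟨GIS.pair d d rfl, hLd, by rw [StmtAux.dd_mul]; exact hCle k⟩
    have h2 : GIS.pair d (β n) (hβfirst n) ∈ {s | ∃ x ∈ cycleSet G (G.loopPow a ha m) d,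
        GIS.le (x * GIS.pair d (β n) (hβfirst n)) s} :=
      ⟨GIS.pair d d rfl, hLd, by rw [StmtAux.dd_mul]; exact hCle n⟩
    have hnk' : {s | ∃ x ∈ cycleSet G (G.loopPow a ha m) d,
        GIS.le (x * GIS.pair d (β n) (hβfirst n)) s} =
        {s | ∃ x ∈ cycleSet G (G.loopPow a ha m) d,
        GIS.le (x * GIS.pair d (β k) (hβfirst k)) s} := hnk
    have h1' := h1
    rw [← hnk'] at h1'
    have h2' := h2
    rw [hnk'] at h2'
    exact le_antisymm (hkey k n h2') (hkey n k h1')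
  · intro n
    exact ⟨GIS.pair d (β n) (hβfirst n), by rw [StmtAux.pair_mul_inv]; exact hLd, rfl⟩
end
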